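/- arXiv:1703.04257 — 3 statements merged into one kernel-verified Lean document; each statement's English description precedes it below -/
import Mathlib

section
/- Let 𝓕 : Σ → 𝒵 be a Legendre immersion (rank-2 totally null subbundle of Σ×ℝ^{4,2} with (dσ₁,σ₂)=0 for all sections and satisfying the immersion condition), umbilic-free near x, with distinct curvature sphere congruences s₁ = span{σ₁}, s₂ = span{σ₂} and curvature directions X ∈ ΓT₁, Y ∈ ΓT₂. Then {d_X σ₂, d_Y σ₁, T, F, q, p} is a basis of ℝ⁶ at each point (where F, T are the projections to the spaceform M and tangent plane congruence N determined by the point sphere complex p and spaceform vector q, assuming the matrix B of pairings of σ₁,σ₂ against p,q is invertible). Consequently the signed area density λ of the spaceform projection f is proportional (by a nonvanishing smooth factor) to (σ₁,p)(σ₂,p). -/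
/-- The bilinear form of signature (-,+,+,+,+,-) on ℝ^{4,2} = ℝ⁶. -/
noncomputable def Bf (X Y : Fin 6 → ℝ) : ℝ :=
  -(X 0 * Y 0) + X 1 * Y 1 + X 2 * Y 2 + X 3 * Y 3 + X 4 * Y 4 - X 5 * Y 5

noncomputable def pvec : Fin 6 → ℝ := ![0,0,0,0,0,1]
noncomputable def qvec : Fin 6 → ℝ := ![1,-1,0,0,0,0]

/-- Determinant of three column vectors in ℝ³. -/
noncomputable def det3 (c1 c2 c3 : Fin 3 → ℝ) : ℝ :=
  Matrix.det (Matrix.of fun i j => ![c1, c2, c3] j i)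

/-- The Euclidean projection of the point sphere map F. -/
noncomputable def euc (F : (ℝ × ℝ) → (Fin 6 → ℝ)) : (ℝ × ℝ) → (Fin 3 → ℝ) :=
  fun x => ![F x 2, F x 3, F x 4]

/-! ### Auxiliary lemmas -/

lemma Bf_symm (x y : Fin 6 → ℝ) : Bf x y = Bf y x := by unfold Bf; ring

lemma Bf_add_left (x y z : Fin 6 → ℝ) : Bf (x + y) z = Bf x z + Bf y z := by
  simp only [Bf, Pi.add_apply]; ring

lemma Bf_smul_left (s : ℝ) (x z : Fin 6 → ℝ) : Bf (s • x) z = s * Bf x z := by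
  simp only [Bf, Pi.smul_apply, smul_eq_mul]; ring

lemma Bf_add_right (x y z : Fin 6 → ℝ) : Bf z (x + y) = Bf z x + Bf z y := by
  simp only [Bf, Pi.add_apply]; ring

lemma Bf_smul_right (s : ℝ) (x z : Fin 6 → ℝ) : Bf z (s • x) = s * Bf z x := by
  simp only [Bf, Pi.smul_apply, smul_eq_mul]; ring

lemma Bf_zero_left (z : Fin 6 → ℝ) : Bf 0 z = 0 := by simp [Bf]

lemma Bf_comb (u w u' w' : ℝ) (x y : Fin 6 → ℝ) :
    Bf (u • x + w • y) (u' • x + w' • y)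
      = u * u' * Bf x x + (u * w' + w * u') * Bf x y + w * w' * Bf y y := by
  simp only [Bf, Pi.add_apply, Pi.smul_apply, smul_eq_mul]; ring

lemma pvec5 : pvec 5 = 1 := rfl

lemma Bf_p (x : Fin 6 → ℝ) : Bf x pvec = -x 5 := by
  simp only [Bf, show pvec 0 = 0 from rfl, show pvec 1 = 0 from rfl,
    show pvec 2 = 0 from rfl, show pvec 3 = 0 from rfl, show pvec 4 = 0 from rfl,
    show pvec 5 = 1 from rfl]; ring

lemma Bf_q (x : Fin 6 → ℝ) : Bf x qvec = -x 0 - x 1 := by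
  simp only [Bf, show qvec 0 = 1 from rfl, show qvec 1 = -1 from rfl,
    show qvec 2 = 0 from rfl, show qvec 3 = 0 from rfl, show qvec 4 = 0 from rfl,
    show qvec 5 = 0 from rfl]; ring

lemma det3_expand (c1 c2 c3 : Fin 3 → ℝ) :
    det3 c1 c2 c3 = c1 0 * c2 1 * c3 2 - c1 0 * c2 2 * c3 1 - c2 0 * c1 1 * c3 2
      + c2 0 * c1 2 * c3 1 + c3 0 * c1 1 * c2 2 - c3 0 * c1 2 * c2 1 := by
  unfold det3
  rw [Matrix.det_fin_three]
  simp only [Matrix.of_apply, Matrix.cons_val_zero, Matrix.cons_val_one, Matrix.head_cons,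
    Matrix.cons_val_two, Matrix.tail_cons, Matrix.head_fin_const]
  ring

section derivs
variable {σ τ F G : (ℝ × ℝ) → (Fin 6 → ℝ)} {Ω : Set (ℝ × ℝ)} {y : ℝ × ℝ}

lemma coordD (hσ : DifferentiableAt ℝ σ y) (i : Fin 6) :
    HasFDerivAt (fun z => σ z i)
      ((ContinuousLinearMap.proj i).comp (fderiv ℝ σ y)) y :=
  (ContinuousLinearMap.proj i (R := ℝ) (φ := fun _ : Fin 6 => ℝ)).hasFDerivAt.comp y
    hσ.hasFDerivAt

lemma hasFDerivAt_Bf (hσ : DifferentiableAt ℝ σ y) (hτ : DifferentiableAt ℝ τ y) :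
    ∃ L : (ℝ × ℝ) →L[ℝ] ℝ, HasFDerivAt (fun z => Bf (σ z) (τ z)) L y ∧
      ∀ V, L V = Bf (fderiv ℝ σ y V) (τ y) + Bf (σ y) (fderiv ℝ τ y V) := by
  have hs := fun i => coordD hσ i
  have ht := fun i => coordD hτ i
  have H := (((((((hs 0).mul (ht 0)).neg.add ((hs 1).mul (ht 1))).add
    ((hs 2).mul (ht 2))).add ((hs 3).mul (ht 3))).add ((hs 4).mul (ht 4))).sub
    ((hs 5).mul (ht 5)))
  refine ⟨_, H, ?_⟩
  intro V
  simp only [ContinuousLinearMap.add_apply, ContinuousLinearMap.sub_apply,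
    ContinuousLinearMap.neg_apply, ContinuousLinearMap.smul_apply,
    ContinuousLinearMap.coe_comp', Function.comp_apply, ContinuousLinearMap.proj_apply,
    smul_eq_mul, Bf]
  ring

lemma cdiff {E : Type*} [NormedAddCommGroup E] [NormedSpace ℝ E] {G : (ℝ × ℝ) → E}
    (hΩ : IsOpen Ω) (h : ContDiffOn ℝ (⊤ : ℕ∞) G Ω) (hy : y ∈ Ω) : DifferentiableAt ℝ G y :=
  (h.differentiableOn (by simp)).differentiableAt (hΩ.mem_nhds hy)

lemma Bf_deriv_const (hΩ : IsOpen Ω) (hy : y ∈ Ω)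
    (hσ : DifferentiableAt ℝ σ y) (hτ : DifferentiableAt ℝ τ y) {e : ℝ}
    (hc : ∀ z ∈ Ω, Bf (σ z) (τ z) = e) (V : ℝ × ℝ) :
    Bf (fderiv ℝ σ y V) (τ y) + Bf (σ y) (fderiv ℝ τ y V) = 0 := by
  obtain ⟨L, HL, hLV⟩ := hasFDerivAt_Bf hσ hτ
  have hev : (fun z => Bf (σ z) (τ z)) =ᶠ[nhds y] (fun _ => e) :=
    Filter.eventually_of_mem (hΩ.mem_nhds hy) hc
  have h0 : HasFDerivAt (fun z => Bf (σ z) (τ z)) 0 y :=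
    (hasFDerivAt_const (𝕜 := ℝ) e y).congr_of_eventuallyEq hev
  have : L = 0 := HL.unique h0
  rw [← hLV V, this]; rfl

lemma Bf_deriv_const' (hΩ : IsOpen Ω) (hy : y ∈ Ω)
    (hσ : DifferentiableAt ℝ σ y) {w : Fin 6 → ℝ} {e : ℝ}
    (hc : ∀ z ∈ Ω, Bf (σ z) w = e) (V : ℝ × ℝ) :
    Bf (fderiv ℝ σ y V) w = 0 := by
  have h := Bf_deriv_const (τ := fun _ => w) hΩ hy hσ (differentiableAt_const w) hc V
  rw [fderiv_fun_const] at h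
  simpa [Bf] using h

lemma diffAt_Bf (hσ : DifferentiableAt ℝ σ y) (hτ : DifferentiableAt ℝ τ y) :
    DifferentiableAt ℝ (fun z => Bf (σ z) (τ z)) y := by
  obtain ⟨L, HL, -⟩ := hasFDerivAt_Bf hσ hτ
  exact HL.differentiableAt

lemma fderiv_smul_add {α β : (ℝ × ℝ) → ℝ}
    (hα : DifferentiableAt ℝ α y) (hβ : DifferentiableAt ℝ β y)
    (hG : DifferentiableAt ℝ F y) (hH : DifferentiableAt ℝ G y) (V : ℝ × ℝ) :
    fderiv ℝ (fun z => α z • F z + β z • G z) y V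
      = (fderiv ℝ α y V) • F y + α y • (fderiv ℝ F y V)
        + ((fderiv ℝ β y V) • G y + β y • (fderiv ℝ G y V)) := by
  have H := (hα.hasFDerivAt.smul hG.hasFDerivAt).add (hβ.hasFDerivAt.smul hH.hasFDerivAt)
  rw [show (fun z => α z • F z + β z • G z) = α • F + β • G from rfl, H.fderiv]
  simp only [ContinuousLinearMap.add_apply, ContinuousLinearMap.smul_apply,
    ContinuousLinearMap.smulRight_apply]
  module

lemma contDiffOn_coord (h : ContDiffOn ℝ (⊤ : ℕ∞) σ Ω) (i : Fin 6) :
    ContDiffOn ℝ (⊤ : ℕ∞) (fun z => σ z i) Ω :=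
  (ContinuousLinearMap.proj i (R := ℝ) (φ := fun _ : Fin 6 => ℝ)).contDiff.comp_contDiffOn h

lemma contDiffOn_Bf_right (h : ContDiffOn ℝ (⊤ : ℕ∞) σ Ω) (w : Fin 6 → ℝ) :
    ContDiffOn ℝ (⊤ : ℕ∞) (fun z => Bf (σ z) w) Ω := by
  unfold Bf
  exact ((((((((contDiffOn_coord h 0).mul contDiffOn_const).neg.add
    ((contDiffOn_coord h 1).mul contDiffOn_const)).add
    ((contDiffOn_coord h 2).mul contDiffOn_const)).add
    ((contDiffOn_coord h 3).mul contDiffOn_const)).add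
    ((contDiffOn_coord h 4).mul contDiffOn_const)).sub
    ((contDiffOn_coord h 5).mul contDiffOn_const)))

lemma ContDiffOn.div'' {f g : (ℝ × ℝ) → ℝ} (hf : ContDiffOn ℝ (⊤ : ℕ∞) f Ω)
    (hg : ContDiffOn ℝ (⊤ : ℕ∞) g Ω) (h0 : ∀ z ∈ Ω, g z ≠ 0) :
    ContDiffOn ℝ (⊤ : ℕ∞) (fun z => f z / g z) Ω := by
  have := hf.div hg h0
  rwa [Pi.div_def] at this

noncomputable def E3 : (Fin 6 → ℝ) →L[ℝ] (Fin 3 → ℝ) :=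
  ContinuousLinearMap.pi (fun i => ContinuousLinearMap.proj (![2,3,4] i : Fin 6))

lemma euc_eq_E3 (G : (ℝ × ℝ) → (Fin 6 → ℝ)) : euc G = fun x => E3 (G x) := by
  funext x i
  fin_cases i <;> rfl

lemma euc_apply (G : (ℝ × ℝ) → (Fin 6 → ℝ)) (x : ℝ × ℝ) (i : Fin 3) :
    euc G x i = G x (![2,3,4] i) := by
  fin_cases i <;> rfl

lemma contDiffOn_euc (h : ContDiffOn ℝ (⊤ : ℕ∞) G Ω) : ContDiffOn ℝ (⊤ : ℕ∞) (euc G) Ω := by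
  rw [euc_eq_E3]
  exact E3.contDiff.comp_contDiffOn h

lemma fderiv_euc_apply (hG : DifferentiableAt ℝ G y) (V : ℝ × ℝ) (i : Fin 3) :
    fderiv ℝ (euc G) y V i = fderiv ℝ G y V (![2,3,4] i) := by
  have : fderiv ℝ (euc G) y = E3.comp (fderiv ℝ G y) := by
    rw [euc_eq_E3]
    exact (E3.hasFDerivAt.comp y hG.hasFDerivAt).fderiv
  rw [this]
  simp [E3]

end derivs
set_option maxHeartbeats 2000000

theorem stmt12 (Ω : Set (ℝ × ℝ)) (hΩ : IsOpen Ω)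
    (σ₁ σ₂ F T : (ℝ × ℝ) → (Fin 6 → ℝ)) (X Y : (ℝ × ℝ) → ℝ × ℝ)
    (hσ₁ : ContDiffOn ℝ (⊤ : ℕ∞) σ₁ Ω) (hσ₂ : ContDiffOn ℝ (⊤ : ℕ∞) σ₂ Ω)
    (hFs : ContDiffOn ℝ (⊤ : ℕ∞) F Ω) (hTs : ContDiffOn ℝ (⊤ : ℕ∞) T Ω)
    (hXs : ContDiffOn ℝ (⊤ : ℕ∞) X Ω) (hYs : ContDiffOn ℝ (⊤ : ℕ∞) Y Ω)
    -- F and T are the spaceform projection and tangent plane congruence of 𝓕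
    (hspan : ∀ y ∈ Ω, Submodule.span ℝ {F y, T y} = Submodule.span ℝ {σ₁ y, σ₂ y})
    (hFp : ∀ y ∈ Ω, Bf (F y) pvec = 0) (hFq : ∀ y ∈ Ω, Bf (F y) qvec = -1)
    (hTp : ∀ y ∈ Ω, Bf (T y) pvec = -1) (hTq : ∀ y ∈ Ω, Bf (T y) qvec = 0)
    -- 𝓕 is totally null
    (hFF : ∀ y ∈ Ω, Bf (F y) (F y) = 0) (hTT : ∀ y ∈ Ω, Bf (T y) (T y) = 0)
    (hFT : ∀ y ∈ Ω, Bf (F y) (T y) = 0)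
    -- σ₁, σ₂ are pointwise independent lifts of the curvature spheres
    (hind : ∀ y ∈ Ω, LinearIndependent ℝ ![σ₁ y, σ₂ y])
    -- isotropy (Legendre condition)
    (hiso : ∀ y ∈ Ω, ∀ V : ℝ × ℝ, Bf (fderiv ℝ σ₁ y V) (σ₂ y) = 0)
    -- curvature sphere conditions with curvature directions X for s₁ and Y for s₂
    (hc1 : ∀ y ∈ Ω, fderiv ℝ σ₁ y (X y) ∈ Submodule.span ℝ {σ₁ y, σ₂ y})
    (hc2 : ∀ y ∈ Ω, fderiv ℝ σ₂ y (Y y) ∈ Submodule.span ℝ {σ₁ y, σ₂ y})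
    (hXY : ∀ y ∈ Ω, LinearIndependent ℝ ![X y, Y y])
    -- the matrix B of pairings against p and q is invertible
    (hdetB : ∀ y ∈ Ω,
      Matrix.det !![Bf (σ₁ y) pvec, Bf (σ₂ y) pvec;
                    Bf (σ₁ y) qvec, Bf (σ₂ y) qvec] ≠ 0)
    -- umbilic-free: the only curvature spheres at each point are s₁ and s₂
    (humb : ∀ y ∈ Ω, ∀ v : Fin 6 → ℝ, v ∈ Submodule.span ℝ {σ₁ y, σ₂ y} → v ≠ 0 →
      (∃ V : ℝ × ℝ, V ≠ 0 ∧ ∀ σ : (ℝ × ℝ) → (Fin 6 → ℝ), ContDiffOn ℝ (⊤ : ℕ∞) σ Ω →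
        (∀ z ∈ Ω, σ z ∈ Submodule.span ℝ {σ₁ z, σ₂ z}) →
        σ y ∈ Submodule.span ℝ {v} →
        fderiv ℝ σ y V ∈ Submodule.span ℝ {σ₁ y, σ₂ y}) →
      (v ∈ Submodule.span ℝ {σ₁ y} ∨ v ∈ Submodule.span ℝ {σ₂ y})) :
    (∀ y ∈ Ω, LinearIndependent ℝ
      ![fderiv ℝ σ₂ y (X y), fderiv ℝ σ₁ y (Y y), T y, F y, qvec, pvec]) ∧
    (∃ μ : (ℝ × ℝ) → ℝ, ContDiffOn ℝ (⊤ : ℕ∞) μ Ω ∧ ∀ y ∈ Ω, μ y ≠ 0 ∧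
      det3 (fderiv ℝ (euc F) y (1, 0)) (fderiv ℝ (euc F) y (0, 1)) (euc T y)
        = μ y * (Bf (σ₁ y) pvec * Bf (σ₂ y) pvec)) := by
  classical
  have hdσ₁ : ∀ {y : ℝ × ℝ}, y ∈ Ω → DifferentiableAt ℝ σ₁ y := fun hy => cdiff hΩ hσ₁ hy
  have hdσ₂ : ∀ {y : ℝ × ℝ}, y ∈ Ω → DifferentiableAt ℝ σ₂ y := fun hy => cdiff hΩ hσ₂ hy
  have hdF : ∀ {y : ℝ × ℝ}, y ∈ Ω → DifferentiableAt ℝ F y := fun hy => cdiff hΩ hFs hy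
  have hdT : ∀ {y : ℝ × ℝ}, y ∈ Ω → DifferentiableAt ℝ T y := fun hy => cdiff hΩ hTs hy
  -- scalar form of independence of σ₁, σ₂
  have sig_ind : ∀ y ∈ Ω, ∀ s t : ℝ, s • σ₁ y + t • σ₂ y = 0 → s = 0 ∧ t = 0 := by
    intro y hy s t h
    have h2 : ∑ i : Fin 2, (![s, t]) i • (![σ₁ y, σ₂ y]) i = 0 := by
      rw [Fin.sum_univ_two]; exact h
    have := Fintype.linearIndependent_iff.mp (hind y hy) ![s, t] h2
    exact ⟨this 0, this 1⟩
  have XY_ind : ∀ y ∈ Ω, ∀ s t : ℝ, s • X y + t • Y y = 0 → s = 0 ∧ t = 0 := by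
    intro y hy s t h
    have h2 : ∑ i : Fin 2, (![s, t]) i • (![X y, Y y]) i = 0 := by
      rw [Fin.sum_univ_two]; exact h
    have := Fintype.linearIndependent_iff.mp (hXY y hy) ![s, t] h2
    exact ⟨this 0, this 1⟩
  have memσ₁ : ∀ y : ℝ × ℝ, σ₁ y ∈ Submodule.span ℝ {σ₁ y, σ₂ y} :=
    fun y => Submodule.subset_span (Set.mem_insert _ _)
  have memσ₂ : ∀ y : ℝ × ℝ, σ₂ y ∈ Submodule.span ℝ {σ₁ y, σ₂ y} :=
    fun y => Submodule.subset_span (Set.mem_insert_of_mem _ rfl)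
  have memF : ∀ y ∈ Ω, F y ∈ Submodule.span ℝ {σ₁ y, σ₂ y} := by
    intro y hy; rw [← hspan y hy]; exact Submodule.subset_span (Set.mem_insert _ _)
  have memT : ∀ y ∈ Ω, T y ∈ Submodule.span ℝ {σ₁ y, σ₂ y} := by
    intro y hy; rw [← hspan y hy]; exact Submodule.subset_span (Set.mem_insert_of_mem _ rfl)
  -- the span is totally null
  have hnull : ∀ y ∈ Ω, Bf (σ₁ y) (σ₁ y) = 0 ∧ Bf (σ₁ y) (σ₂ y) = 0 ∧ Bf (σ₂ y) (σ₂ y) = 0 := by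
    intro y hy
    have m1 : σ₁ y ∈ Submodule.span ℝ {F y, T y} := by rw [hspan y hy]; exact memσ₁ y
    have m2 : σ₂ y ∈ Submodule.span ℝ {F y, T y} := by rw [hspan y hy]; exact memσ₂ y
    obtain ⟨u1, w1, h1⟩ := Submodule.mem_span_pair.mp m1
    obtain ⟨u2, w2, h2⟩ := Submodule.mem_span_pair.mp m2
    rw [← h1, ← h2]
    rw [Bf_comb, Bf_comb, Bf_comb, hFF y hy, hTT y hy, hFT y hy]
    refine ⟨by ring, by ring, by ring⟩
  -- derivatives of σ₁, σ₂ are orthogonal to the span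
  have hortho : ∀ y ∈ Ω, ∀ V : ℝ × ℝ,
      Bf (fderiv ℝ σ₁ y V) (σ₁ y) = 0 ∧ Bf (fderiv ℝ σ₁ y V) (σ₂ y) = 0 ∧
      Bf (fderiv ℝ σ₂ y V) (σ₁ y) = 0 ∧ Bf (fderiv ℝ σ₂ y V) (σ₂ y) = 0 := by
    intro y hy V
    have h11 := Bf_deriv_const hΩ hy (hdσ₁ hy) (hdσ₁ hy)
      (fun z hz => (hnull z hz).1) V
    have h22 := Bf_deriv_const hΩ hy (hdσ₂ hy) (hdσ₂ hy)
      (fun z hz => (hnull z hz).2.2) V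
    have h12 := Bf_deriv_const hΩ hy (hdσ₁ hy) (hdσ₂ hy)
      (fun z hz => (hnull z hz).2.1) V
    have e11 : Bf (fderiv ℝ σ₁ y V) (σ₁ y) = 0 := by
      rw [Bf_symm (σ₁ y)] at h11; linarith
    have e22 : Bf (fderiv ℝ σ₂ y V) (σ₂ y) = 0 := by
      rw [Bf_symm (σ₂ y)] at h22; linarith
    have e21 : Bf (fderiv ℝ σ₂ y V) (σ₁ y) = 0 := by
      rw [hiso y hy V, Bf_symm (σ₁ y)] at h12; linarith
    exact ⟨e11, hiso y hy V, e21, e22⟩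
  -- orthogonality to F and T for vectors orthogonal to σ₁, σ₂
  have horthoFT : ∀ y ∈ Ω, ∀ D : Fin 6 → ℝ, Bf D (σ₁ y) = 0 → Bf D (σ₂ y) = 0 →
      Bf D (F y) = 0 ∧ Bf D (T y) = 0 := by
    intro y hy D h1 h2
    obtain ⟨u, w, hu⟩ := Submodule.mem_span_pair.mp (memF y hy)
    obtain ⟨u', w', hu'⟩ := Submodule.mem_span_pair.mp (memT y hy)
    constructor
    · rw [← hu, Bf_add_right, Bf_smul_right, Bf_smul_right, h1, h2]; ring
    · rw [← hu', Bf_add_right, Bf_smul_right, Bf_smul_right, h1, h2]; ring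
  -- coordinate facts
  have hF5 : ∀ y ∈ Ω, F y 5 = 0 := by
    intro y hy; have := hFp y hy; rw [Bf_p] at this; linarith
  have hT5 : ∀ y ∈ Ω, T y 5 = 1 := by
    intro y hy; have := hTp y hy; rw [Bf_p] at this; linarith
  have hF01 : ∀ y ∈ Ω, F y 0 + F y 1 = 1 := by
    intro y hy; have := hFq y hy; rw [Bf_q] at this; linarith
  have hT01 : ∀ y ∈ Ω, T y 0 + T y 1 = 0 := by
    intro y hy; have := hTq y hy; rw [Bf_q] at this; linarith
  have hdF5 : ∀ y ∈ Ω, ∀ V : ℝ × ℝ, fderiv ℝ F y V 5 = 0 := by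
    intro y hy V
    have := Bf_deriv_const' hΩ hy (hdF hy) (hFp) V
    rw [Bf_p] at this; linarith
  have hdT5 : ∀ y ∈ Ω, ∀ V : ℝ × ℝ, fderiv ℝ T y V 5 = 0 := by
    intro y hy V
    have := Bf_deriv_const' hΩ hy (hdT hy) (hTp) V
    rw [Bf_p] at this; linarith
  have hdF01 : ∀ y ∈ Ω, ∀ V : ℝ × ℝ, fderiv ℝ F y V 0 + fderiv ℝ F y V 1 = 0 := by
    intro y hy V
    have := Bf_deriv_const' hΩ hy (hdF hy) (hFq) V
    rw [Bf_q] at this; linarith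
  have hdT01 : ∀ y ∈ Ω, ∀ V : ℝ × ℝ, fderiv ℝ T y V 0 + fderiv ℝ T y V 1 = 0 := by
    intro y hy V
    have := Bf_deriv_const' hΩ hy (hdT hy) (hTq) V
    rw [Bf_q] at this; linarith
  -- determinant of the pairing matrix
  have hDet : ∀ y ∈ Ω,
      Bf (σ₁ y) pvec * Bf (σ₂ y) qvec - Bf (σ₂ y) pvec * Bf (σ₁ y) qvec ≠ 0 := by
    intro y hy
    have := hdetB y hy
    rwa [Matrix.det_fin_two_of] at this
  -- the key consequence of umbilic-freeness
  have key : ∀ y ∈ Ω, ∀ c₁ c₂ : ℝ,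
      c₁ • fderiv ℝ σ₂ y (X y) + c₂ • fderiv ℝ σ₁ y (Y y) ∈ Submodule.span ℝ {σ₁ y, σ₂ y} →
      c₁ = 0 ∧ c₂ = 0 := by
    intro y hy c₁ c₂ hmem
    by_contra hne
    have hv_mem : σ₁ y + σ₂ y ∈ Submodule.span ℝ {σ₁ y, σ₂ y} :=
      Submodule.add_mem _ (memσ₁ y) (memσ₂ y)
    have hv_ne : σ₁ y + σ₂ y ≠ 0 := by
      intro h0
      have := sig_ind y hy 1 1 (by simpa using h0)
      exact one_ne_zero this.1
    have hVne : c₁ • X y + c₂ • Y y ≠ 0 := by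
      intro h0; exact hne (XY_ind y hy c₁ c₂ h0)
    have main : ∀ σ : (ℝ × ℝ) → (Fin 6 → ℝ), ContDiffOn ℝ (⊤ : ℕ∞) σ Ω →
        (∀ z ∈ Ω, σ z ∈ Submodule.span ℝ {σ₁ z, σ₂ z}) →
        σ y ∈ Submodule.span ℝ {σ₁ y + σ₂ y} →
        fderiv ℝ σ y (c₁ • X y + c₂ • Y y) ∈ Submodule.span ℝ {σ₁ y, σ₂ y} := by
      intro σ hσs hσsec hσv
      set α : (ℝ × ℝ) → ℝ := fun z =>
        (Bf (σ z) pvec * Bf (σ₂ z) qvec - Bf (σ z) qvec * Bf (σ₂ z) pvec) /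
        (Bf (σ₁ z) pvec * Bf (σ₂ z) qvec - Bf (σ₂ z) pvec * Bf (σ₁ z) qvec) with hαdef
      set β : (ℝ × ℝ) → ℝ := fun z =>
        (Bf (σ₁ z) pvec * Bf (σ z) qvec - Bf (σ₁ z) qvec * Bf (σ z) pvec) /
        (Bf (σ₁ z) pvec * Bf (σ₂ z) qvec - Bf (σ₂ z) pvec * Bf (σ₁ z) qvec) with hβdef
      have hid : ∀ z ∈ Ω, σ z = α z • σ₁ z + β z • σ₂ z := by
        intro z hz
        obtain ⟨u, w, huw⟩ := Submodule.mem_span_pair.mp (hσsec z hz)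
        have hp : Bf (σ z) pvec = u * Bf (σ₁ z) pvec + w * Bf (σ₂ z) pvec := by
          rw [← huw, Bf_add_left, Bf_smul_left, Bf_smul_left]
        have hq : Bf (σ z) qvec = u * Bf (σ₁ z) qvec + w * Bf (σ₂ z) qvec := by
          rw [← huw, Bf_add_left, Bf_smul_left, Bf_smul_left]
        have hα : α z = u := by
          rw [hαdef]
          rw [div_eq_iff (hDet z hz), hp, hq]; ring
        have hβ : β z = w := by
          rw [hβdef]
          rw [div_eq_iff (hDet z hz), hp, hq]; ring
        rw [hα, hβ, huw]
      have hdσ : DifferentiableAt ℝ σ y := cdiff hΩ hσs hy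
      have hDb : ∀ (τ : (ℝ × ℝ) → (Fin 6 → ℝ)), DifferentiableAt ℝ τ y → ∀ w : Fin 6 → ℝ,
          DifferentiableAt ℝ (fun z => Bf (τ z) w) y := by
        intro τ hτ w
        exact diffAt_Bf hτ (differentiableAt_const w)
      have hdα : DifferentiableAt ℝ α y := by
        rw [hαdef]
        have hnum := ((hDb σ hdσ pvec).mul (hDb σ₂ (hdσ₂ hy) qvec)).sub
            ((hDb σ hdσ qvec).mul (hDb σ₂ (hdσ₂ hy) pvec))
        have hden := ((hDb σ₁ (hdσ₁ hy) pvec).mul (hDb σ₂ (hdσ₂ hy) qvec)).sub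
            ((hDb σ₂ (hdσ₂ hy) pvec).mul (hDb σ₁ (hdσ₁ hy) qvec))
        have := hnum.mul (hden.inv (hDet y hy))
        simp only [div_eq_mul_inv]; exact this
      have hdβ : DifferentiableAt ℝ β y := by
        rw [hβdef]
        have hnum := ((hDb σ₁ (hdσ₁ hy) pvec).mul (hDb σ hdσ qvec)).sub
            ((hDb σ₁ (hdσ₁ hy) qvec).mul (hDb σ hdσ pvec))
        have hden := ((hDb σ₁ (hdσ₁ hy) pvec).mul (hDb σ₂ (hdσ₂ hy) qvec)).sub
            ((hDb σ₂ (hdσ₂ hy) pvec).mul (hDb σ₁ (hdσ₁ hy) qvec))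
        have := hnum.mul (hden.inv (hDet y hy))
        simp only [div_eq_mul_inv]; exact this
      have hev : σ =ᶠ[nhds y] (fun z => α z • σ₁ z + β z • σ₂ z) :=
        Filter.eventuallyEq_of_mem (hΩ.mem_nhds hy) hid
      have hfd : fderiv ℝ σ y = fderiv ℝ (fun z => α z • σ₁ z + β z • σ₂ z) y :=
        hev.fderiv_eq
      obtain ⟨t, ht⟩ := Submodule.mem_span_singleton.mp hσv
      have hσy : σ y = α y • σ₁ y + β y • σ₂ y := hid y hy
      have hts : (α y - t) • σ₁ y + (β y - t) • σ₂ y = 0 := by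
        have h1 : (α y - t) • σ₁ y + (β y - t) • σ₂ y
            = (α y • σ₁ y + β y • σ₂ y) - t • (σ₁ y + σ₂ y) := by module
        rw [h1, ← hσy, ht, sub_self]
      obtain ⟨hαt', hβt'⟩ := sig_ind y hy _ _ hts
      have hαt : α y = t := by linarith [sub_eq_zero.mp hαt']
      have hβt : β y = t := by linarith [sub_eq_zero.mp hβt']
      rw [hfd, fderiv_smul_add hdα hdβ (hdσ₁ hy) (hdσ₂ hy)]
      have hd1 : fderiv ℝ σ₁ y (c₁ • X y + c₂ • Y y)
          = c₁ • fderiv ℝ σ₁ y (X y) + c₂ • fderiv ℝ σ₁ y (Y y) := by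
        rw [map_add, map_smul, map_smul]
      have hd2 : fderiv ℝ σ₂ y (c₁ • X y + c₂ • Y y)
          = c₁ • fderiv ℝ σ₂ y (X y) + c₂ • fderiv ℝ σ₂ y (Y y) := by
        rw [map_add, map_smul, map_smul]
      rw [hαt, hβt, hd1, hd2]
      have hsplit : (fderiv ℝ α y (c₁ • X y + c₂ • Y y)) • σ₁ y
            + t • (c₁ • fderiv ℝ σ₁ y (X y) + c₂ • fderiv ℝ σ₁ y (Y y))
            + ((fderiv ℝ β y (c₁ • X y + c₂ • Y y)) • σ₂ y
            + t • (c₁ • fderiv ℝ σ₂ y (X y) + c₂ • fderiv ℝ σ₂ y (Y y)))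
          = (fderiv ℝ α y (c₁ • X y + c₂ • Y y)) • σ₁ y
            + (fderiv ℝ β y (c₁ • X y + c₂ • Y y)) • σ₂ y
            + (t * c₁) • fderiv ℝ σ₁ y (X y)
            + (t * c₂) • fderiv ℝ σ₂ y (Y y)
            + t • (c₁ • fderiv ℝ σ₂ y (X y) + c₂ • fderiv ℝ σ₁ y (Y y)) := by
        module
      rw [hsplit]
      exact Submodule.add_mem _
        (Submodule.add_mem _
          (Submodule.add_mem _
            (Submodule.add_mem _ (Submodule.smul_mem _ _ (memσ₁ y))
              (Submodule.smul_mem _ _ (memσ₂ y)))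
            (Submodule.smul_mem _ _ (hc1 y hy)))
          (Submodule.smul_mem _ _ (hc2 y hy)))
        (Submodule.smul_mem _ _ hmem)
    have hdisj := humb y hy (σ₁ y + σ₂ y) hv_mem hv_ne ⟨c₁ • X y + c₂ • Y y, hVne, main⟩
    rcases hdisj with h | h
    · obtain ⟨r, hr⟩ := Submodule.mem_span_singleton.mp h
      have h0 : (r - 1) • σ₁ y + (-1 : ℝ) • σ₂ y = 0 := by
        have : (r - 1) • σ₁ y + (-1 : ℝ) • σ₂ y = r • σ₁ y - (σ₁ y + σ₂ y) := by module
        rw [this, hr, sub_self]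
      have := (sig_ind y hy _ _ h0).2
      norm_num at this
    · obtain ⟨r, hr⟩ := Submodule.mem_span_singleton.mp h
      have h0 : (-1 : ℝ) • σ₁ y + (r - 1) • σ₂ y = 0 := by
        have : (-1 : ℝ) • σ₁ y + (r - 1) • σ₂ y = r • σ₂ y - (σ₁ y + σ₂ y) := by module
        rw [this, hr, sub_self]
      have := (sig_ind y hy _ _ h0).1
      norm_num at this
  -- Part 1: the six vectors form a basis
  have part1 : ∀ y ∈ Ω, LinearIndependent ℝ
      ![fderiv ℝ σ₂ y (X y), fderiv ℝ σ₁ y (Y y), T y, F y, qvec, pvec] := by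
    intro y hy
    rw [Fintype.linearIndependent_iff]
    intro g hg0
    have hg : g 0 • fderiv ℝ σ₂ y (X y) + g 1 • fderiv ℝ σ₁ y (Y y) + g 2 • T y
        + g 3 • F y + g 4 • qvec + g 5 • pvec = 0 := by
      rw [Fin.sum_univ_six] at hg0; exact hg0
    have o1 := horthoFT y hy _ (hortho y hy (X y)).2.2.1 (hortho y hy (X y)).2.2.2
    have o2 := horthoFT y hy _ (hortho y hy (Y y)).1 (hortho y hy (Y y)).2.1
    have pairF := congrArg (fun w => Bf w (F y)) hg
    simp only [Bf_add_left, Bf_smul_left, Bf_zero_left] at pairF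
    rw [o1.1, o2.1, Bf_symm (T y) (F y), hFT y hy, hFF y hy,
      Bf_symm qvec (F y), hFq y hy, Bf_symm pvec (F y), hFp y hy] at pairF
    have hg4 : g 4 = 0 := by linarith
    have pairT := congrArg (fun w => Bf w (T y)) hg
    simp only [Bf_add_left, Bf_smul_left, Bf_zero_left] at pairT
    rw [o1.2, o2.2, hTT y hy, hFT y hy,
      Bf_symm qvec (T y), hTq y hy, Bf_symm pvec (T y), hTp y hy] at pairT
    have hg5 : g 5 = 0 := by linarith
    have hmem2 : g 0 • fderiv ℝ σ₂ y (X y) + g 1 • fderiv ℝ σ₁ y (Y y)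
        ∈ Submodule.span ℝ {σ₁ y, σ₂ y} := by
      have he : g 0 • fderiv ℝ σ₂ y (X y) + g 1 • fderiv ℝ σ₁ y (Y y)
          = -(g 2 • T y) - g 3 • F y := by
        have hg' := hg
        rw [hg4, hg5, zero_smul, zero_smul, add_zero, add_zero] at hg'
        have : g 0 • fderiv ℝ σ₂ y (X y) + g 1 • fderiv ℝ σ₁ y (Y y)
            = (g 0 • fderiv ℝ σ₂ y (X y) + g 1 • fderiv ℝ σ₁ y (Y y) + g 2 • T y + g 3 • F y)
              - (g 2 • T y) - g 3 • F y := by module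
        rw [this, hg']
        module
      rw [he]
      exact Submodule.sub_mem _ (Submodule.neg_mem _ (Submodule.smul_mem _ _ (memT y hy)))
        (Submodule.smul_mem _ _ (memF y hy))
    obtain ⟨hgg0, hgg1⟩ := key y hy _ _ hmem2
    have hg23 : g 2 • T y + g 3 • F y = 0 := by
      have hg' := hg
      rw [hg4, hg5, hgg0, hgg1] at hg'
      simpa using hg'
    have pairp := congrArg (fun w => Bf w pvec) hg23
    simp only [Bf_add_left, Bf_smul_left, Bf_zero_left] at pairp
    rw [hTp y hy, hFp y hy] at pairp
    have hg2 : g 2 = 0 := by linarith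
    have pairq := congrArg (fun w => Bf w qvec) hg23
    simp only [Bf_add_left, Bf_smul_left, Bf_zero_left] at pairq
    rw [hTq y hy, hFq y hy] at pairq
    have hg3 : g 3 = 0 := by linarith
    intro i
    fin_cases i
    · exact hgg0
    · exact hgg1
    · exact hg2
    · exact hg3
    · exact hg4
    · exact hg5
  refine ⟨part1, ?_⟩
  -- Part 2
  set aa : (ℝ × ℝ) → ℝ := fun z => -Bf (σ₁ z) qvec with haadef
  set bb : (ℝ × ℝ) → ℝ := fun z => -Bf (σ₁ z) pvec with hbbdef
  set cc : (ℝ × ℝ) → ℝ := fun z => -Bf (σ₂ z) qvec with hccdef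
  set dd : (ℝ × ℝ) → ℝ := fun z => -Bf (σ₂ z) pvec with hdddef
  have haay : ∀ z, aa z = -Bf (σ₁ z) qvec := fun z => by rw [haadef]
  have hbby : ∀ z, bb z = -Bf (σ₁ z) pvec := fun z => by rw [hbbdef]
  have hccy : ∀ z, cc z = -Bf (σ₂ z) qvec := fun z => by rw [hccdef]
  have hddy : ∀ z, dd z = -Bf (σ₂ z) pvec := fun z => by rw [hdddef]
  have habT : ∀ z ∈ Ω, σ₁ z = aa z • F z + bb z • T z := by
    intro z hz
    have m1 : σ₁ z ∈ Submodule.span ℝ {F z, T z} := by rw [hspan z hz]; exact memσ₁ z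
    obtain ⟨u, w, huw⟩ := Submodule.mem_span_pair.mp m1
    have hp : Bf (σ₁ z) pvec = u * Bf (F z) pvec + w * Bf (T z) pvec := by
      rw [← huw, Bf_add_left, Bf_smul_left, Bf_smul_left]
    have hq : Bf (σ₁ z) qvec = u * Bf (F z) qvec + w * Bf (T z) qvec := by
      rw [← huw, Bf_add_left, Bf_smul_left, Bf_smul_left]
    rw [hFp z hz, hTp z hz] at hp
    rw [hFq z hz, hTq z hz] at hq
    have hu : u = aa z := by rw [haay z]; linarith
    have hw : w = bb z := by rw [hbby z]; linarith
    rw [← huw, hu, hw]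
  have hcdT : ∀ z ∈ Ω, σ₂ z = cc z • F z + dd z • T z := by
    intro z hz
    have m2 : σ₂ z ∈ Submodule.span ℝ {F z, T z} := by rw [hspan z hz]; exact memσ₂ z
    obtain ⟨u, w, huw⟩ := Submodule.mem_span_pair.mp m2
    have hp : Bf (σ₂ z) pvec = u * Bf (F z) pvec + w * Bf (T z) pvec := by
      rw [← huw, Bf_add_left, Bf_smul_left, Bf_smul_left]
    have hq : Bf (σ₂ z) qvec = u * Bf (F z) qvec + w * Bf (T z) qvec := by
      rw [← huw, Bf_add_left, Bf_smul_left, Bf_smul_left]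
    rw [hFp z hz, hTp z hz] at hp
    rw [hFq z hz, hTq z hz] at hq
    have hu : u = cc z := by rw [hccy z]; linarith
    have hw : w = dd z := by rw [hddy z]; linarith
    rw [← huw, hu, hw]
  have hK : ∀ z ∈ Ω, aa z * dd z - bb z * cc z ≠ 0 := by
    intro z hz h0
    apply hDet z hz
    rw [haay z, hbby z, hccy z, hddy z] at h0
    linarith [h0]
  have hδ : ∀ z ∈ Ω, (X z).1 * (Y z).2 - (X z).2 * (Y z).1 ≠ 0 := by
    intro z hz h0
    have e1 : ((Y z).2) • X z + (-(X z).2) • Y z = 0 := by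
      refine Prod.ext ?_ ?_
      · show (Y z).2 * (X z).1 + -(X z).2 * (Y z).1 = (0 : ℝ)
        linarith
      · show (Y z).2 * (X z).2 + -(X z).2 * (Y z).2 = (0 : ℝ)
        ring
    obtain ⟨hY2, hX2'⟩ := XY_ind z hz _ _ e1
    have hX2 : (X z).2 = 0 := by linarith [neg_eq_zero.mp hX2']
    have e2 : ((Y z).1) • X z + (-(X z).1) • Y z = 0 := by
      refine Prod.ext ?_ ?_
      · show (Y z).1 * (X z).1 + -(X z).1 * (Y z).1 = (0 : ℝ)
        ring
      · show (Y z).1 * (X z).2 + -(X z).1 * (Y z).2 = (0 : ℝ)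
        rw [hX2, hY2]
        ring
    obtain ⟨hY1, hX1'⟩ := XY_ind z hz _ _ e2
    have hX1 : (X z).1 = 0 := by linarith [neg_eq_zero.mp hX1']
    have e3 : (1 : ℝ) • X z + (0 : ℝ) • Y z = 0 := by
      simp [Prod.ext_iff, hX1, hX2]
    exact one_ne_zero (XY_ind z hz _ _ e3).1
  have hdaa : ∀ {z : ℝ × ℝ}, z ∈ Ω → DifferentiableAt ℝ aa z := by
    intro z hz; rw [haadef]
    exact (diffAt_Bf (hdσ₁ hz) (differentiableAt_const qvec)).neg
  have hdbb : ∀ {z : ℝ × ℝ}, z ∈ Ω → DifferentiableAt ℝ bb z := by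
    intro z hz; rw [hbbdef]
    exact (diffAt_Bf (hdσ₁ hz) (differentiableAt_const pvec)).neg
  have hdcc : ∀ {z : ℝ × ℝ}, z ∈ Ω → DifferentiableAt ℝ cc z := by
    intro z hz; rw [hccdef]
    exact (diffAt_Bf (hdσ₂ hz) (differentiableAt_const qvec)).neg
  have hddd : ∀ {z : ℝ × ℝ}, z ∈ Ω → DifferentiableAt ℝ dd z := by
    intro z hz; rw [hdddef]
    exact (diffAt_Bf (hdσ₂ hz) (differentiableAt_const pvec)).neg
  -- curvature conditions in coordinates
  have hcurvX : ∀ y ∈ Ω, ∀ j : Fin 6,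
      aa y * fderiv ℝ F y (X y) j + bb y * fderiv ℝ T y (X y) j = 0 := by
    intro y hy
    have hev : σ₁ =ᶠ[nhds y] fun z => aa z • F z + bb z • T z :=
      Filter.eventuallyEq_of_mem (hΩ.mem_nhds hy) habT
    have happ : fderiv ℝ σ₁ y (X y) = (fderiv ℝ aa y (X y)) • F y + aa y • fderiv ℝ F y (X y)
        + ((fderiv ℝ bb y (X y)) • T y + bb y • fderiv ℝ T y (X y)) := by
      rw [hev.fderiv_eq]
      exact fderiv_smul_add (hdaa hy) (hdbb hy) (hdF hy) (hdT hy) (X y)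
    have hmem := hc1 y hy
    rw [← hspan y hy] at hmem
    have hRmem : aa y • fderiv ℝ F y (X y) + bb y • fderiv ℝ T y (X y)
        ∈ Submodule.span ℝ {F y, T y} := by
      have heq : aa y • fderiv ℝ F y (X y) + bb y • fderiv ℝ T y (X y)
          = fderiv ℝ σ₁ y (X y) - ((fderiv ℝ aa y (X y)) • F y + (fderiv ℝ bb y (X y)) • T y) := by
        rw [happ]; module
      rw [heq]
      exact Submodule.sub_mem _ hmem
        (Submodule.add_mem _
          (Submodule.smul_mem _ _ (Submodule.subset_span (Set.mem_insert _ _)))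
          (Submodule.smul_mem _ _ (Submodule.subset_span (Set.mem_insert_of_mem _ rfl))))
    obtain ⟨u, w, huw⟩ := Submodule.mem_span_pair.mp hRmem
    have hdFXp : Bf (fderiv ℝ F y (X y)) pvec = 0 := Bf_deriv_const' hΩ hy (hdF hy) hFp (X y)
    have hdTXp : Bf (fderiv ℝ T y (X y)) pvec = 0 := Bf_deriv_const' hΩ hy (hdT hy) hTp (X y)
    have hdFXq : Bf (fderiv ℝ F y (X y)) qvec = 0 := Bf_deriv_const' hΩ hy (hdF hy) hFq (X y)
    have hdTXq : Bf (fderiv ℝ T y (X y)) qvec = 0 := Bf_deriv_const' hΩ hy (hdT hy) hTq (X y)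
    have hp := congrArg (fun v => Bf v pvec) huw
    simp only [Bf_add_left, Bf_smul_left] at hp
    rw [hFp y hy, hTp y hy, hdFXp, hdTXp] at hp
    have hw0 : w = 0 := by linarith
    have hq := congrArg (fun v => Bf v qvec) huw
    simp only [Bf_add_left, Bf_smul_left] at hq
    rw [hFq y hy, hTq y hy, hdFXq, hdTXq] at hq
    have hu0 : u = 0 := by linarith
    have hR0 : aa y • fderiv ℝ F y (X y) + bb y • fderiv ℝ T y (X y) = 0 := by
      rw [← huw, hu0, hw0]; simp
    intro j
    have := congrFun hR0 j
    simpa using this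
  have hcurvY : ∀ y ∈ Ω, ∀ j : Fin 6,
      cc y * fderiv ℝ F y (Y y) j + dd y * fderiv ℝ T y (Y y) j = 0 := by
    intro y hy
    have hev : σ₂ =ᶠ[nhds y] fun z => cc z • F z + dd z • T z :=
      Filter.eventuallyEq_of_mem (hΩ.mem_nhds hy) hcdT
    have happ : fderiv ℝ σ₂ y (Y y) = (fderiv ℝ cc y (Y y)) • F y + cc y • fderiv ℝ F y (Y y)
        + ((fderiv ℝ dd y (Y y)) • T y + dd y • fderiv ℝ T y (Y y)) := by
      rw [hev.fderiv_eq]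
      exact fderiv_smul_add (hdcc hy) (hddd hy) (hdF hy) (hdT hy) (Y y)
    have hmem := hc2 y hy
    rw [← hspan y hy] at hmem
    have hRmem : cc y • fderiv ℝ F y (Y y) + dd y • fderiv ℝ T y (Y y)
        ∈ Submodule.span ℝ {F y, T y} := by
      have heq : cc y • fderiv ℝ F y (Y y) + dd y • fderiv ℝ T y (Y y)
          = fderiv ℝ σ₂ y (Y y) - ((fderiv ℝ cc y (Y y)) • F y + (fderiv ℝ dd y (Y y)) • T y) := by
        rw [happ]; module
      rw [heq]
      exact Submodule.sub_mem _ hmem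
        (Submodule.add_mem _
          (Submodule.smul_mem _ _ (Submodule.subset_span (Set.mem_insert _ _)))
          (Submodule.smul_mem _ _ (Submodule.subset_span (Set.mem_insert_of_mem _ rfl))))
    obtain ⟨u, w, huw⟩ := Submodule.mem_span_pair.mp hRmem
    have hdFYp : Bf (fderiv ℝ F y (Y y)) pvec = 0 := Bf_deriv_const' hΩ hy (hdF hy) hFp (Y y)
    have hdTYp : Bf (fderiv ℝ T y (Y y)) pvec = 0 := Bf_deriv_const' hΩ hy (hdT hy) hTp (Y y)
    have hdFYq : Bf (fderiv ℝ F y (Y y)) qvec = 0 := Bf_deriv_const' hΩ hy (hdF hy) hFq (Y y)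
    have hdTYq : Bf (fderiv ℝ T y (Y y)) qvec = 0 := Bf_deriv_const' hΩ hy (hdT hy) hTq (Y y)
    have hp := congrArg (fun v => Bf v pvec) huw
    simp only [Bf_add_left, Bf_smul_left] at hp
    rw [hFp y hy, hTp y hy, hdFYp, hdTYp] at hp
    have hw0 : w = 0 := by linarith
    have hq := congrArg (fun v => Bf v qvec) huw
    simp only [Bf_add_left, Bf_smul_left] at hq
    rw [hFq y hy, hTq y hy, hdFYq, hdTYq] at hq
    have hu0 : u = 0 := by linarith
    have hR0 : cc y • fderiv ℝ F y (Y y) + dd y • fderiv ℝ T y (Y y) = 0 := by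
      rw [← huw, hu0, hw0]; simp
    intro j
    have := congrFun hR0 j
    simpa using this
  -- derivative decompositions
  have hdec2 : ∀ y ∈ Ω, ∀ j : Fin 6, fderiv ℝ σ₂ y (X y) j
      = fderiv ℝ cc y (X y) * F y j + cc y * fderiv ℝ F y (X y) j
        + (fderiv ℝ dd y (X y) * T y j + dd y * fderiv ℝ T y (X y) j) := by
    intro y hy j
    have hev : σ₂ =ᶠ[nhds y] fun z => cc z • F z + dd z • T z :=
      Filter.eventuallyEq_of_mem (hΩ.mem_nhds hy) hcdT
    have happ : fderiv ℝ σ₂ y (X y) = (fderiv ℝ cc y (X y)) • F y + cc y • fderiv ℝ F y (X y)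
        + ((fderiv ℝ dd y (X y)) • T y + dd y • fderiv ℝ T y (X y)) := by
      rw [hev.fderiv_eq]
      exact fderiv_smul_add (hdcc hy) (hddd hy) (hdF hy) (hdT hy) (X y)
    have := congrFun happ j
    simpa using this
  have hdec1 : ∀ y ∈ Ω, ∀ j : Fin 6, fderiv ℝ σ₁ y (Y y) j
      = fderiv ℝ aa y (Y y) * F y j + aa y * fderiv ℝ F y (Y y) j
        + (fderiv ℝ bb y (Y y) * T y j + bb y * fderiv ℝ T y (Y y) j) := by
    intro y hy j
    have hev : σ₁ =ᶠ[nhds y] fun z => aa z • F z + bb z • T z :=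
      Filter.eventuallyEq_of_mem (hΩ.mem_nhds hy) habT
    have happ : fderiv ℝ σ₁ y (Y y) = (fderiv ℝ aa y (Y y)) • F y + aa y • fderiv ℝ F y (Y y)
        + ((fderiv ℝ bb y (Y y)) • T y + bb y • fderiv ℝ T y (Y y)) := by
      rw [hev.fderiv_eq]
      exact fderiv_smul_add (hdaa hy) (hdbb hy) (hdF hy) (hdT hy) (Y y)
    have := congrFun happ j
    simpa using this
  refine ⟨fun z =>
    -(det3 (fun i => cc z * fderiv ℝ (euc F) z (X z) i + dd z * fderiv ℝ (euc T) z (X z) i)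
        (fun i => aa z * fderiv ℝ (euc F) z (Y z) i + bb z * fderiv ℝ (euc T) z (Y z) i)
        (euc T z)) /
      ((aa z * dd z - bb z * cc z) ^ 2 * ((X z).1 * (Y z).2 - (X z).2 * (Y z).1)), ?_, ?_⟩
  · -- smoothness of μ
    have hFe : ContDiffOn ℝ (⊤ : ℕ∞) (euc F) Ω := contDiffOn_euc hFs
    have hTe : ContDiffOn ℝ (⊤ : ℕ∞) (euc T) Ω := contDiffOn_euc hTs
    have hdFe : ContDiffOn ℝ (⊤ : ℕ∞) (fun z => fderiv ℝ (euc F) z) Ω :=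
      hFe.fderiv_of_isOpen hΩ (by simp)
    have hdTe : ContDiffOn ℝ (⊤ : ℕ∞) (fun z => fderiv ℝ (euc T) z) Ω :=
      hTe.fderiv_of_isOpen hΩ (by simp)
    have hfX : ContDiffOn ℝ (⊤ : ℕ∞) (fun z => fderiv ℝ (euc F) z (X z)) Ω := hdFe.clm_apply hXs
    have hfY : ContDiffOn ℝ (⊤ : ℕ∞) (fun z => fderiv ℝ (euc F) z (Y z)) Ω := hdFe.clm_apply hYs
    have htX : ContDiffOn ℝ (⊤ : ℕ∞) (fun z => fderiv ℝ (euc T) z (X z)) Ω := hdTe.clm_apply hXs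
    have htY : ContDiffOn ℝ (⊤ : ℕ∞) (fun z => fderiv ℝ (euc T) z (Y z)) Ω := hdTe.clm_apply hYs
    have hfXi : ∀ i, ContDiffOn ℝ (⊤ : ℕ∞) (fun z => fderiv ℝ (euc F) z (X z) i) Ω :=
      fun i => contDiffOn_pi.mp hfX i
    have hfYi : ∀ i, ContDiffOn ℝ (⊤ : ℕ∞) (fun z => fderiv ℝ (euc F) z (Y z) i) Ω :=
      fun i => contDiffOn_pi.mp hfY i
    have htXi : ∀ i, ContDiffOn ℝ (⊤ : ℕ∞) (fun z => fderiv ℝ (euc T) z (X z) i) Ω :=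
      fun i => contDiffOn_pi.mp htX i
    have htYi : ∀ i, ContDiffOn ℝ (⊤ : ℕ∞) (fun z => fderiv ℝ (euc T) z (Y z) i) Ω :=
      fun i => contDiffOn_pi.mp htY i
    have hti : ∀ i, ContDiffOn ℝ (⊤ : ℕ∞) (fun z => euc T z i) Ω := fun i => contDiffOn_pi.mp hTe i
    have haaS : ContDiffOn ℝ (⊤ : ℕ∞) aa Ω := by
      rw [haadef]; exact (contDiffOn_Bf_right hσ₁ qvec).neg
    have hbbS : ContDiffOn ℝ (⊤ : ℕ∞) bb Ω := by
      rw [hbbdef]; exact (contDiffOn_Bf_right hσ₁ pvec).neg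
    have hccS : ContDiffOn ℝ (⊤ : ℕ∞) cc Ω := by
      rw [hccdef]; exact (contDiffOn_Bf_right hσ₂ qvec).neg
    have hddS : ContDiffOn ℝ (⊤ : ℕ∞) dd Ω := by
      rw [hdddef]; exact (contDiffOn_Bf_right hσ₂ pvec).neg
    have hX1 : ContDiffOn ℝ (⊤ : ℕ∞) (fun z => (X z).1) Ω :=
      (ContinuousLinearMap.fst ℝ ℝ ℝ).contDiff.comp_contDiffOn hXs
    have hX2 : ContDiffOn ℝ (⊤ : ℕ∞) (fun z => (X z).2) Ω :=
      (ContinuousLinearMap.snd ℝ ℝ ℝ).contDiff.comp_contDiffOn hXs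
    have hY1 : ContDiffOn ℝ (⊤ : ℕ∞) (fun z => (Y z).1) Ω :=
      (ContinuousLinearMap.fst ℝ ℝ ℝ).contDiff.comp_contDiffOn hYs
    have hY2 : ContDiffOn ℝ (⊤ : ℕ∞) (fun z => (Y z).2) Ω :=
      (ContinuousLinearMap.snd ℝ ℝ ℝ).contDiff.comp_contDiffOn hYs
    have hU : ∀ i, ContDiffOn ℝ (⊤ : ℕ∞)
        (fun z => cc z * fderiv ℝ (euc F) z (X z) i + dd z * fderiv ℝ (euc T) z (X z) i) Ω :=
      fun i => (hccS.mul (hfXi i)).add (hddS.mul (htXi i))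
    have hW : ∀ i, ContDiffOn ℝ (⊤ : ℕ∞)
        (fun z => aa z * fderiv ℝ (euc F) z (Y z) i + bb z * fderiv ℝ (euc T) z (Y z) i) Ω :=
      fun i => (haaS.mul (hfYi i)).add (hbbS.mul (htYi i))
    simp only [det3_expand]
    apply ContDiffOn.div''
    · exact ((((((((hU 0).mul (hW 1)).mul (hti 2)).sub
        (((hU 0).mul (hW 2)).mul (hti 1))).sub
        (((hW 0).mul (hU 1)).mul (hti 2))).add
        (((hW 0).mul (hU 2)).mul (hti 1))).add
        (((hti 0).mul (hU 1)).mul (hW 2))).sub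
        (((hti 0).mul (hU 2)).mul (hW 1))).neg
    · exact (((haaS.mul hddS).sub (hbbS.mul hccS)).pow 2).mul
        ((hX1.mul hY2).sub (hX2.mul hY1))
    · intro z hz
      exact mul_ne_zero (pow_ne_zero 2 (hK z hz)) (hδ z hz)
  · intro y hy
    beta_reduce
    set fX := fderiv ℝ (euc F) y (X y) with hfXdef
    set tX := fderiv ℝ (euc T) y (X y) with htXdef
    set fY := fderiv ℝ (euc F) y (Y y) with hfYdef
    set tY := fderiv ℝ (euc T) y (Y y) with htYdef
    set tv := euc T y with htvdef
    set fu := fderiv ℝ (euc F) y (1, 0) with hfudef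
    set fw := fderiv ℝ (euc F) y (0, 1) with hfwdef
    set Δ := det3 (fun i => cc y * fX i + dd y * tX i) (fun i => aa y * fY i + bb y * tY i) tv
      with hΔdef
    have hKy := hK y hy
    have hδy := hδ y hy
    -- curvature relations in euc coordinates
    have hcA : ∀ i : Fin 3, aa y * fX i + bb y * tX i = 0 := by
      intro i
      rw [hfXdef, htXdef, fderiv_euc_apply (hdF hy) (X y) i, fderiv_euc_apply (hdT hy) (X y) i]
      exact hcurvX y hy (![2,3,4] i)
    have hcB : ∀ i : Fin 3, cc y * fY i + dd y * tY i = 0 := by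
      intro i
      rw [hfYdef, htYdef, fderiv_euc_apply (hdF hy) (Y y) i, fderiv_euc_apply (hdT hy) (Y y) i]
      exact hcurvY y hy (![2,3,4] i)
    -- Δ is nonzero
    have hΔne : Δ ≠ 0 := by
      intro hΔ0
      obtain ⟨v, hvne, hmv⟩ := Matrix.exists_mulVec_eq_zero_iff.mpr (hΔ0 : _)
      have hvi : ∀ i : Fin 3,
          (cc y * fX i + dd y * tX i) * v 0 + (aa y * fY i + bb y * tY i) * v 1
            + tv i * v 2 = 0 := by
        intro i
        have := congrFun hmv i
        simpa [Matrix.mulVec, dotProduct, Fin.sum_univ_three, Matrix.of_apply,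
          Matrix.cons_val_zero, Matrix.cons_val_one, Matrix.head_cons, Matrix.cons_val_two,
          Matrix.tail_cons] using this
      have hvi6 : ∀ i : Fin 3,
          (cc y * fderiv ℝ F y (X y) (![2,3,4] i) + dd y * fderiv ℝ T y (X y) (![2,3,4] i)) * v 0
          + (aa y * fderiv ℝ F y (Y y) (![2,3,4] i) + bb y * fderiv ℝ T y (Y y) (![2,3,4] i)) * v 1
          + T y (![2,3,4] i) * v 2 = 0 := by
        intro i
        have h := hvi i
        rw [hfXdef, htXdef, hfYdef, htYdef, htvdef,
          fderiv_euc_apply (hdF hy) (X y) i, fderiv_euc_apply (hdT hy) (X y) i,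
          fderiv_euc_apply (hdF hy) (Y y) i, fderiv_euc_apply (hdT hy) (Y y) i,
          euc_apply T y i] at h
        exact h
      have hg6 : v 0 • fderiv ℝ σ₂ y (X y) + v 1 • fderiv ℝ σ₁ y (Y y)
          + (v 2 - (v 0 * fderiv ℝ dd y (X y) + v 1 * fderiv ℝ bb y (Y y))) • T y
          + (-(v 0 * fderiv ℝ cc y (X y) + v 1 * fderiv ℝ aa y (Y y))) • F y
          + (-(v 0 * (cc y * fderiv ℝ F y (X y) 0 + dd y * fderiv ℝ T y (X y) 0)
              + v 1 * (aa y * fderiv ℝ F y (Y y) 0 + bb y * fderiv ℝ T y (Y y) 0)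
              + v 2 * T y 0)) • qvec
          + (-(v 2)) • pvec = 0 := by
        funext j
        have h2 := hdec2 y hy j
        have h1 := hdec1 y hy j
        simp only [Pi.add_apply, Pi.smul_apply, Pi.zero_apply, smul_eq_mul]
        fin_cases j
        · show v 0 * fderiv ℝ σ₂ y (X y) 0 + v 1 * fderiv ℝ σ₁ y (Y y) 0
            + (v 2 - (v 0 * fderiv ℝ dd y (X y) + v 1 * fderiv ℝ bb y (Y y))) * T y 0
            + (-(v 0 * fderiv ℝ cc y (X y) + v 1 * fderiv ℝ aa y (Y y))) * F y 0
            + (-(v 0 * (cc y * fderiv ℝ F y (X y) 0 + dd y * fderiv ℝ T y (X y) 0)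
                + v 1 * (aa y * fderiv ℝ F y (Y y) 0 + bb y * fderiv ℝ T y (Y y) 0)
                + v 2 * T y 0)) * 1
            + (-(v 2)) * 0 = 0
          have h20 := hdec2 y hy 0
          have h10 := hdec1 y hy 0
          linear_combination v 0 * h20 + v 1 * h10
        · show v 0 * fderiv ℝ σ₂ y (X y) 1 + v 1 * fderiv ℝ σ₁ y (Y y) 1
            + (v 2 - (v 0 * fderiv ℝ dd y (X y) + v 1 * fderiv ℝ bb y (Y y))) * T y 1
            + (-(v 0 * fderiv ℝ cc y (X y) + v 1 * fderiv ℝ aa y (Y y))) * F y 1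
            + (-(v 0 * (cc y * fderiv ℝ F y (X y) 0 + dd y * fderiv ℝ T y (X y) 0)
                + v 1 * (aa y * fderiv ℝ F y (Y y) 0 + bb y * fderiv ℝ T y (Y y) 0)
                + v 2 * T y 0)) * (-1)
            + (-(v 2)) * 0 = 0
          have h21 := hdec2 y hy 1
          have h11 := hdec1 y hy 1
          have hdFX01 := hdF01 y hy (X y)
          have hdTX01 := hdT01 y hy (X y)
          have hdFY01 := hdF01 y hy (Y y)
          have hdTY01 := hdT01 y hy (Y y)
          have hT01y := hT01 y hy
          have hF01y := hF01 y hy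
          linear_combination v 0 * h21 + v 1 * h11
            + (v 0 * cc y) * hdFX01 + (v 0 * dd y) * hdTX01
            + (v 1 * aa y) * hdFY01 + (v 1 * bb y) * hdTY01
            + v 2 * hT01y
        · show v 0 * fderiv ℝ σ₂ y (X y) 2 + v 1 * fderiv ℝ σ₁ y (Y y) 2
            + (v 2 - (v 0 * fderiv ℝ dd y (X y) + v 1 * fderiv ℝ bb y (Y y))) * T y 2
            + (-(v 0 * fderiv ℝ cc y (X y) + v 1 * fderiv ℝ aa y (Y y))) * F y 2
            + (-(v 0 * (cc y * fderiv ℝ F y (X y) 0 + dd y * fderiv ℝ T y (X y) 0)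
                + v 1 * (aa y * fderiv ℝ F y (Y y) 0 + bb y * fderiv ℝ T y (Y y) 0)
                + v 2 * T y 0)) * 0
            + (-(v 2)) * 0 = 0
          have h22 := hdec2 y hy 2
          have h12 := hdec1 y hy 2
          have hv0 : (cc y * fderiv ℝ F y (X y) 2 + dd y * fderiv ℝ T y (X y) 2) * v 0
              + (aa y * fderiv ℝ F y (Y y) 2 + bb y * fderiv ℝ T y (Y y) 2) * v 1
              + T y 2 * v 2 = 0 := hvi6 0
          linear_combination v 0 * h22 + v 1 * h12 + hv0
        · show v 0 * fderiv ℝ σ₂ y (X y) 3 + v 1 * fderiv ℝ σ₁ y (Y y) 3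
            + (v 2 - (v 0 * fderiv ℝ dd y (X y) + v 1 * fderiv ℝ bb y (Y y))) * T y 3
            + (-(v 0 * fderiv ℝ cc y (X y) + v 1 * fderiv ℝ aa y (Y y))) * F y 3
            + (-(v 0 * (cc y * fderiv ℝ F y (X y) 0 + dd y * fderiv ℝ T y (X y) 0)
                + v 1 * (aa y * fderiv ℝ F y (Y y) 0 + bb y * fderiv ℝ T y (Y y) 0)
                + v 2 * T y 0)) * 0
            + (-(v 2)) * 0 = 0
          have h23 := hdec2 y hy 3
          have h13 := hdec1 y hy 3
          have hv1 : (cc y * fderiv ℝ F y (X y) 3 + dd y * fderiv ℝ T y (X y) 3) * v 0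
              + (aa y * fderiv ℝ F y (Y y) 3 + bb y * fderiv ℝ T y (Y y) 3) * v 1
              + T y 3 * v 2 = 0 := hvi6 1
          linear_combination v 0 * h23 + v 1 * h13 + hv1
        · show v 0 * fderiv ℝ σ₂ y (X y) 4 + v 1 * fderiv ℝ σ₁ y (Y y) 4
            + (v 2 - (v 0 * fderiv ℝ dd y (X y) + v 1 * fderiv ℝ bb y (Y y))) * T y 4
            + (-(v 0 * fderiv ℝ cc y (X y) + v 1 * fderiv ℝ aa y (Y y))) * F y 4
            + (-(v 0 * (cc y * fderiv ℝ F y (X y) 0 + dd y * fderiv ℝ T y (X y) 0)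
                + v 1 * (aa y * fderiv ℝ F y (Y y) 0 + bb y * fderiv ℝ T y (Y y) 0)
                + v 2 * T y 0)) * 0
            + (-(v 2)) * 0 = 0
          have h24 := hdec2 y hy 4
          have h14 := hdec1 y hy 4
          have hv2 : (cc y * fderiv ℝ F y (X y) 4 + dd y * fderiv ℝ T y (X y) 4) * v 0
              + (aa y * fderiv ℝ F y (Y y) 4 + bb y * fderiv ℝ T y (Y y) 4) * v 1
              + T y 4 * v 2 = 0 := hvi6 2
          linear_combination v 0 * h24 + v 1 * h14 + hv2
        · show v 0 * fderiv ℝ σ₂ y (X y) 5 + v 1 * fderiv ℝ σ₁ y (Y y) 5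
            + (v 2 - (v 0 * fderiv ℝ dd y (X y) + v 1 * fderiv ℝ bb y (Y y))) * T y 5
            + (-(v 0 * fderiv ℝ cc y (X y) + v 1 * fderiv ℝ aa y (Y y))) * F y 5
            + (-(v 0 * (cc y * fderiv ℝ F y (X y) 0 + dd y * fderiv ℝ T y (X y) 0)
                + v 1 * (aa y * fderiv ℝ F y (Y y) 0 + bb y * fderiv ℝ T y (Y y) 0)
                + v 2 * T y 0)) * 0
            + (-(v 2)) * 1 = 0
          have h25 := hdec2 y hy 5
          have h15 := hdec1 y hy 5
          have e1 := hdF5 y hy (X y)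
          have e2 := hdT5 y hy (X y)
          have e3 := hdF5 y hy (Y y)
          have e4 := hdT5 y hy (Y y)
          have e5 := hF5 y hy
          have e6 := hT5 y hy
          linear_combination v 0 * h25 + v 1 * h15 + (v 0 * cc y) * e1 + (v 0 * dd y) * e2
            + (v 1 * aa y) * e3 + (v 1 * bb y) * e4 + v 2 * e6
      have hall := Fintype.linearIndependent_iff.mp (part1 y hy)
        ![v 0, v 1, v 2 - (v 0 * fderiv ℝ dd y (X y) + v 1 * fderiv ℝ bb y (Y y)),
          -(v 0 * fderiv ℝ cc y (X y) + v 1 * fderiv ℝ aa y (Y y)),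
          -(v 0 * (cc y * fderiv ℝ F y (X y) 0 + dd y * fderiv ℝ T y (X y) 0)
              + v 1 * (aa y * fderiv ℝ F y (Y y) 0 + bb y * fderiv ℝ T y (Y y) 0)
              + v 2 * T y 0),
          -(v 2)]
        (by rw [Fin.sum_univ_six]; exact hg6)
      apply hvne
      funext i
      fin_cases i
      · exact hall 0
      · exact hall 1
      · have h5 : -(v 2) = 0 := hall 5
        show v 2 = (0 : ℝ)
        linarith
    have hμy : -(det3 (fun i => cc y * fderiv ℝ (euc F) y (X y) i
            + dd y * fderiv ℝ (euc T) y (X y) i)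
          (fun i => aa y * fderiv ℝ (euc F) y (Y y) i + bb y * fderiv ℝ (euc T) y (Y y) i)
          (euc T y)) /
        ((aa y * dd y - bb y * cc y) ^ 2 * ((X y).1 * (Y y).2 - (X y).2 * (Y y).1))
        = -Δ / ((aa y * dd y - bb y * cc y) ^ 2 * ((X y).1 * (Y y).2 - (X y).2 * (Y y).1)) := by
      rw [hΔdef, hfXdef, htXdef, hfYdef, htYdef, htvdef]
    constructor
    · -- μ y ≠ 0
      rw [hμy]
      exact div_ne_zero (neg_ne_zero.mpr hΔne)
        (mul_ne_zero (pow_ne_zero 2 hKy) hδy)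
    · -- the identity
      rw [hμy]
      have hu' : ∀ i : Fin 3, bb y * (cc y * fX i + dd y * tX i)
          = (bb y * cc y - aa y * dd y) * fX i := fun i => by linear_combination dd y * hcA i
      have hw' : ∀ i : Fin 3, dd y * (aa y * fY i + bb y * tY i)
          = (aa y * dd y - bb y * cc y) * fY i := fun i => by linear_combination bb y * hcB i
      have s1 : (bb y * dd y) * Δ
          = det3 (fun i => bb y * (cc y * fX i + dd y * tX i))
              (fun i => dd y * (aa y * fY i + bb y * tY i)) tv := by
        rw [hΔdef]; simp only [det3_expand]; ring
      have e1 : (fun i => bb y * (cc y * fX i + dd y * tX i))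
          = (fun i => (bb y * cc y - aa y * dd y) * fX i) := funext hu'
      have e2 : (fun i => dd y * (aa y * fY i + bb y * tY i))
          = (fun i => (aa y * dd y - bb y * cc y) * fY i) := funext hw'
      rw [e1, e2] at s1
      have s2 : det3 (fun i => (bb y * cc y - aa y * dd y) * fX i)
            (fun i => (aa y * dd y - bb y * cc y) * fY i) tv
          = -(aa y * dd y - bb y * cc y) ^ 2 * det3 (fun i => fX i) (fun i => fY i) tv := by
        simp only [det3_expand]; ring
      -- direction decomposition
      have hdirX : X y = (X y).1 • ((1:ℝ), (0:ℝ)) + (X y).2 • ((0:ℝ), (1:ℝ)) := by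
        refine Prod.ext ?_ ?_ <;> simp
      have hdirY : Y y = (Y y).1 • ((1:ℝ), (0:ℝ)) + (Y y).2 • ((0:ℝ), (1:ℝ)) := by
        refine Prod.ext ?_ ?_ <;> simp
      have hXl : ∀ i : Fin 3, fX i = (X y).1 * fu i + (X y).2 * fw i := by
        intro i
        have h2 : fX = (X y).1 • fu + (X y).2 • fw := by
          rw [hfXdef, hfudef, hfwdef]
          have h3 := congrArg (fun v => fderiv ℝ (euc F) y v) hdirX
          rw [map_add, map_smul, map_smul] at h3
          exact h3
        rw [h2]
        rfl
      have hYl : ∀ i : Fin 3, fY i = (Y y).1 * fu i + (Y y).2 * fw i := by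
        intro i
        have h2 : fY = (Y y).1 • fu + (Y y).2 • fw := by
          rw [hfYdef, hfudef, hfwdef]
          have h3 := congrArg (fun v => fderiv ℝ (euc F) y v) hdirY
          rw [map_add, map_smul, map_smul] at h3
          exact h3
        rw [h2]
        rfl
      have s3 : det3 (fun i => fX i) (fun i => fY i) tv
          = ((X y).1 * (Y y).2 - (X y).2 * (Y y).1) * det3 fu fw tv := by
        simp only [det3_expand]
        rw [hXl 0, hXl 1, hXl 2, hYl 0, hYl 1, hYl 2]
        ring
      have s4 : (bb y * dd y) * Δ
          = -(aa y * dd y - bb y * cc y) ^ 2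
            * (((X y).1 * (Y y).2 - (X y).2 * (Y y).1) * det3 fu fw tv) := by
        rw [s1, s2, s3]
      have hbp : Bf (σ₁ y) pvec = -bb y := by
        have : bb y = -Bf (σ₁ y) pvec := by rw [hbbdef]
        linarith
      have hdp : Bf (σ₂ y) pvec = -dd y := by
        have : dd y = -Bf (σ₂ y) pvec := by rw [hdddef]
        linarith
      rw [hbp, hdp]
      rw [div_mul_eq_mul_div, eq_div_iff (mul_ne_zero (pow_ne_zero 2 hKy) hδy)]
      linear_combination s4
end

section
/- (Theorem: Lie-geometric criterion for cuspidal edges.) Let 𝓕 be a Legendre immersion, x a non-umbilic point, p the point sphere complex with s₁(x) ⊥ p (so the projection f is singular at x). Let σ₁ be a nowhere-zero lift of the curvature sphere congruence s₁ and X ∈ ΓT₁. Then d_{X_x} σ₁ ∉ s₁(x) if and only if d_X λ ≠ 0 at x, where λ = (σ₁,p)(σ₂,p) is (proportional to) the signed area density of f — i.e., by the Kokubu–Rossman–Saji–Umehara–Yamada criterion, if and only if f has a cuspidal edge at x. -/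
lemma Bf_pvec (v : Fin 6 → ℝ) : Bf v pvec = -(v 5) := by
  have h : ∀ i, pvec i = ![0,0,0,0,0,(1:ℝ)] i := fun i => rfl
  simp only [Bf, h]
  have h5 : (![0,0,0,0,0,(1:ℝ)]) 5 = 1 := rfl
  norm_num [h5, Matrix.cons_val_zero, Matrix.cons_val_one]
  rw [show (![0,0,0,0,0,(1:ℝ)]) 2 = 0 from rfl, show (![0,0,0,0,0,(1:ℝ)]) 3 = 0 from rfl,
    show (![0,0,0,0,0,(1:ℝ)]) 4 = 0 from rfl]; ring

theorem stmt14 (Ω : Set (ℝ × ℝ)) (hΩ : IsOpen Ω) (x : ℝ × ℝ) (hx : x ∈ Ω)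
    (σ₁ σ₂ : (ℝ × ℝ) → (Fin 6 → ℝ)) (X : (ℝ × ℝ) → ℝ × ℝ) (α β : (ℝ × ℝ) → ℝ)
    (hσ₁ : ContDiffOn ℝ (⊤ : ℕ∞) σ₁ Ω) (hσ₂ : ContDiffOn ℝ (⊤ : ℕ∞) σ₂ Ω)
    -- σ₁, σ₂ are pointwise-independent (in particular nowhere-zero) lifts
    (hind : ∀ y ∈ Ω, LinearIndependent ℝ ![σ₁ y, σ₂ y])
    -- X is the curvature direction of s₁ : d_X σ₁ = α σ₁ + β σ₂
    (hrel : ∀ y ∈ Ω, fderiv ℝ σ₁ y (X y) = α y • σ₁ y + β y • σ₂ y)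
    -- s₁(x) ⊥ p (so the projection is singular at x), while (σ₂(x),p) ≠ 0
    (hs1 : Bf (σ₁ x) pvec = 0) (hs2 : Bf (σ₂ x) pvec ≠ 0) :
    -- λ = (σ₁,p)(σ₂,p) is (proportional to) the signed area density
    (fderiv ℝ (fun y => Bf (σ₁ y) pvec * Bf (σ₂ y) pvec) x (X x) = 0 ↔ β x = 0) ∧
    (β x = 0 ↔ fderiv ℝ σ₁ x (X x) ∈ Submodule.span ℝ {σ₁ x}) ∧
    (fderiv ℝ (fun y => Bf (σ₁ y) pvec * Bf (σ₂ y) pvec) x (X x) ≠ 0 ↔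
      fderiv ℝ σ₁ x (X x) ∉ Submodule.span ℝ {σ₁ x}) := by
  have hnx : Ω ∈ nhds x := hΩ.mem_nhds hx
  have hd1 : DifferentiableAt ℝ σ₁ x :=
    (hσ₁.contDiffAt hnx).differentiableAt (by simp)
  have hd2 : DifferentiableAt ℝ σ₂ x :=
    (hσ₂.contDiffAt hnx).differentiableAt (by simp)
  have h15 : σ₁ x 5 = 0 := by
    rw [Bf_pvec] at hs1; linarith
  have h25 : σ₂ x 5 ≠ 0 := by
    rw [Bf_pvec] at hs2; intro h; apply hs2; rw [h]; ring
  -- derivative of components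
  set P : (Fin 6 → ℝ) →L[ℝ] ℝ := ContinuousLinearMap.proj 5 with hP
  have hc1 : HasFDerivAt (fun y => σ₁ y 5) (P.comp (fderiv ℝ σ₁ x)) x :=
    (P.hasFDerivAt.comp x hd1.hasFDerivAt)
  have hc2 : HasFDerivAt (fun y => σ₂ y 5) (P.comp (fderiv ℝ σ₂ x)) x :=
    (P.hasFDerivAt.comp x hd2.hasFDerivAt)
  have hlam : (fun y => Bf (σ₁ y) pvec * Bf (σ₂ y) pvec)
      = fun y => σ₁ y 5 * σ₂ y 5 := by
    funext y; rw [Bf_pvec, Bf_pvec]; ring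
  have hmul : fderiv ℝ (fun y => σ₁ y 5 * σ₂ y 5) x =
      σ₁ x 5 • P.comp (fderiv ℝ σ₂ x) + σ₂ x 5 • P.comp (fderiv ℝ σ₁ x) :=
    (hc1.mul hc2).fderiv
  have hA : fderiv ℝ σ₁ x (X x) = α x • σ₁ x + β x • σ₂ x := hrel x hx
  have hA5 : fderiv ℝ σ₁ x (X x) 5 = β x * σ₂ x 5 := by
    rw [hA]; simp [h15]
  have hval : fderiv ℝ (fun y => Bf (σ₁ y) pvec * Bf (σ₂ y) pvec) x (X x)
      = β x * (σ₂ x 5 * σ₂ x 5) := by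
    rw [hlam, hmul]
    simp only [ContinuousLinearMap.add_apply, ContinuousLinearMap.smul_apply,
      ContinuousLinearMap.coe_comp', Function.comp_apply]
    have : P (fderiv ℝ σ₁ x (X x)) = β x * σ₂ x 5 := by
      simpa [hP] using hA5
    rw [this]
    simp [h15, smul_eq_mul]
    ring
  have h1 : fderiv ℝ (fun y => Bf (σ₁ y) pvec * Bf (σ₂ y) pvec) x (X x) = 0 ↔ β x = 0 := by
    rw [hval]
    constructor
    · intro h
      rcases mul_eq_zero.1 h with h | h
      · exact h
      · exact absurd (mul_self_eq_zero.1 h) h25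
    · intro h; rw [h]; ring
  have h2 : β x = 0 ↔ fderiv ℝ σ₁ x (X x) ∈ Submodule.span ℝ {σ₁ x} := by
    constructor
    · intro h
      rw [hA, h, zero_smul, add_zero]
      exact Submodule.smul_mem _ _ (Submodule.mem_span_singleton_self _)
    · intro h
      rcases Submodule.mem_span_singleton.1 h with ⟨c, hc⟩
      have hz : (α x - c) • σ₁ x + β x • σ₂ x = 0 := by
        rw [sub_smul]
        rw [hA] at hc
        linear_combination (norm := module) -hc
      exact ((LinearIndependent.pair_iff.1 (hind x hx)) _ _ hz).2
  exact ⟨h1, h2, by rw [not_iff_not]; exact h1.trans h2⟩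
end

section
/- (Tensoriality and symmetry of the umbilic cubic form.) Let 𝓕 be a Legendre immersion and x an umbilic point with unique curvature sphere line s(x) ⊂ 𝓕(x), meaning (dσ)_x ∈ T_xΣ ⊗ 𝓕(x) for every section σ with σ(x) ∈ s(x). Define 𝒞(X,Y,Z)(σ, σ̃) = (d_X d_Y d_Z σ̃, σ) for vector fields X,Y,Z and sections σ, σ̃ of 𝓕 with σ(x) ∈ s(x). Then at x: (i) ((d_Y d_Z σ̃)(x), σ(x)) = 0 for all Y, Z; (ii) ((d_X d_Y d_Z σ)(x), σ(x)) = 0 (so 𝒞_x(s(x), s(x)) = 0); (iii) 𝒞 at x is ℝ-multilinear (tensorial) in X, Y, Z and symmetric in X, Y, Z; (iv) the value of 𝒞 at x depends only on σ(x) and on σ̃(x) mod s(x). -/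
set_option synthInstance.maxHeartbeats 1000000
set_option maxHeartbeats 1000000
set_option linter.unusedVariables false


/-- Directional derivative along a vector field (flat connection). -/
noncomputable def dirD {E : Type*} [NormedAddCommGroup E] [NormedSpace ℝ E]
    (X : (ℝ × ℝ) → ℝ × ℝ) (g : (ℝ × ℝ) → E) : (ℝ × ℝ) → E :=
  fun y => fderiv ℝ g y (X y)

/-- A smooth section of the rank-2 bundle 𝓕 = span{F,T} over Ω. -/
def IsSec (Ω : Set (ℝ × ℝ)) (F T σ : (ℝ × ℝ) → (Fin 6 → ℝ)) : Prop :=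
  ContDiffOn ℝ (⊤ : ℕ∞) σ Ω ∧ ∀ y ∈ Ω, σ y ∈ Submodule.span ℝ {F y, T y}

/-- The cubic form 𝒞(X,Y,Z)(σ,σ̃) = (d_X d_Y d_Z σ̃, σ) at a point x. -/
noncomputable def cub (X Y Z : (ℝ × ℝ) → ℝ × ℝ) (σ σt : (ℝ × ℝ) → (Fin 6 → ℝ))
    (x : ℝ × ℝ) : ℝ :=
  Bf (dirD X (dirD Y (dirD Z σt)) x) (σ x)

section BfLemmas

noncomputable def prj (i : Fin 6) : (Fin 6 → ℝ) →L[ℝ] ℝ := ContinuousLinearMap.proj i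

noncomputable def B2 : (Fin 6 → ℝ) →L[ℝ] ((Fin 6 → ℝ) →L[ℝ] ℝ) :=
  (prj 1).smulRight (prj 1) + (prj 2).smulRight (prj 2) + (prj 3).smulRight (prj 3)
    + (prj 4).smulRight (prj 4) - (prj 0).smulRight (prj 0) - (prj 5).smulRight (prj 5)

lemma B2_apply (X Y : Fin 6 → ℝ) : B2 X Y = Bf X Y := by
  simp [B2, Bf, prj, ContinuousLinearMap.smulRight_apply]
  ring

lemma Bf_symm_s17 (X Y : Fin 6 → ℝ) : Bf X Y = Bf Y X := by simp only [Bf]; ring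

lemma Bf_add_left_s17 (X X' Y : Fin 6 → ℝ) : Bf (X + X') Y = Bf X Y + Bf X' Y := by
  simp only [Bf, Pi.add_apply]; ring

lemma Bf_smul_left_s17 (c : ℝ) (X Y : Fin 6 → ℝ) : Bf (c • X) Y = c * Bf X Y := by
  simp only [Bf, Pi.smul_apply, smul_eq_mul]; ring

lemma Bf_span_right {w u a b : Fin 6 → ℝ} (ha : Bf w a = 0) (hb : Bf w b = 0)
    (hu : u ∈ Submodule.span ℝ {a, b}) : Bf w u = 0 := by
  obtain ⟨c, d, rfl⟩ := Submodule.mem_span_pair.1 hu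
  simp only [Bf, Pi.add_apply, Pi.smul_apply, smul_eq_mul] at ha hb ⊢
  linear_combination c * ha + d * hb

lemma Bf_span_left {w u a b : Fin 6 → ℝ} (ha : Bf a w = 0) (hb : Bf b w = 0)
    (hu : u ∈ Submodule.span ℝ {a, b}) : Bf u w = 0 := by
  rw [Bf_symm_s17]
  exact Bf_span_right (by rw [Bf_symm_s17]; exact ha) (by rw [Bf_symm_s17]; exact hb) hu

end BfLemmas

section Calc

variable {P P' E' : Type*} [NormedAddCommGroup P] [NormedSpace ℝ P]
  [NormedAddCommGroup P'] [NormedSpace ℝ P']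
  [NormedAddCommGroup E'] [NormedSpace ℝ E']

lemma myDiffAt {f : P → E'} {Ω : Set P} (hΩ : IsOpen Ω) (hf : ContDiffOn ℝ (⊤ : ℕ∞) f Ω)
    {y : P} (hy : y ∈ Ω) : DifferentiableAt ℝ f y :=
  (hf.contDiffAt (hΩ.mem_nhds hy)).differentiableAt (by simp)

lemma mySmoothD {f : P → E'} {Ω : Set P} (hΩ : IsOpen Ω) (hf : ContDiffOn ℝ (⊤ : ℕ∞) f Ω) :
    ContDiffOn ℝ (⊤ : ℕ∞) (fderiv ℝ f) Ω :=
  hf.fderiv_of_isOpen hΩ (by simp)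

lemma mySmoothApply {A : P → (P' →L[ℝ] E')} {Ω : Set P} (hA : ContDiffOn ℝ (⊤ : ℕ∞) A Ω) (w : P') :
    ContDiffOn ℝ (⊤ : ℕ∞) (fun y => A y w) Ω :=
  hA.clm_apply contDiffOn_const

lemma fderiv_congr_on {f g : P → E'} {Ω : Set P} (hΩ : IsOpen Ω) (h : Set.EqOn f g Ω)
    {y : P} (hy : y ∈ Ω) : fderiv ℝ f y = fderiv ℝ g y :=
  Filter.EventuallyEq.fderiv_eq (Filter.eventuallyEq_of_mem (hΩ.mem_nhds hy) h)

lemma fderiv_apply_const {A : P → (P' →L[ℝ] E')} {x : P} (hA : DifferentiableAt ℝ A x)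
    (w : P') (v : P) : fderiv ℝ (fun y => A y w) x v = fderiv ℝ A x v w := by
  rw [fderiv_clm_apply hA (differentiableAt_const w)]
  simp

lemma fderiv_apply_pt {A : P → (P' →L[ℝ] E')} {u : P → P'} {x : P}
    (hA : DifferentiableAt ℝ A x) (hu : DifferentiableAt ℝ u x) (v : P) :
    fderiv ℝ (fun y => A y (u y)) x v
      = A x (fderiv ℝ u x v) + fderiv ℝ A x v (u x) := by
  rw [fderiv_clm_apply hA hu]
  simp

lemma fderiv_Bf_apply {g h : P → (Fin 6 → ℝ)} {x : P} (hg : DifferentiableAt ℝ g x)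
    (hh : DifferentiableAt ℝ h x) (v : P) :
    fderiv ℝ (fun y => Bf (g y) (h y)) x v
      = Bf (fderiv ℝ g x v) (h x) + Bf (g x) (fderiv ℝ h x v) := by
  have hc : DifferentiableAt ℝ (fun y => B2 (g y)) x :=
    DifferentiableAt.comp x (B2.differentiable.differentiableAt) hg
  have e : (fun y => Bf (g y) (h y)) = fun y => (fun z => B2 (g z)) y (h y) := by
    funext y; rw [B2_apply]
  have hcd : fderiv ℝ (fun y => B2 (g y)) x = B2.comp (fderiv ℝ g x) := by
    rw [show (fun y => B2 (g y)) = (⇑B2) ∘ g from rfl,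
      fderiv_comp x (B2.differentiable.differentiableAt) hg, B2.fderiv]
  rw [e, fderiv_clm_apply hc hh, hcd]
  simp [B2_apply, add_comm]

end Calc

section Geom

variable {Ω : Set (ℝ × ℝ)} (hΩ : IsOpen Ω) {x : ℝ × ℝ} (hx : x ∈ Ω)
    {F T : (ℝ × ℝ) → (Fin 6 → ℝ)}
    (hFs : ContDiffOn ℝ (⊤ : ℕ∞) F Ω) (hTs : ContDiffOn ℝ (⊤ : ℕ∞) T Ω)
    (hnull : ∀ y ∈ Ω, Bf (F y) (F y) = 0 ∧ Bf (T y) (T y) = 0 ∧ Bf (F y) (T y) = 0)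
    (hiso : ∀ y ∈ Ω, ∀ V : ℝ × ℝ,
      Bf (fderiv ℝ F y V) (F y) = 0 ∧ Bf (fderiv ℝ F y V) (T y) = 0 ∧
      Bf (fderiv ℝ T y V) (F y) = 0 ∧ Bf (fderiv ℝ T y V) (T y) = 0)
    {v₀ : Fin 6 → ℝ}
    (humb : ∀ σ : (ℝ × ℝ) → (Fin 6 → ℝ), IsSec Ω F T σ →
      σ x ∈ Submodule.span ℝ {v₀} →
      ∀ V : ℝ × ℝ, fderiv ℝ σ x V ∈ Submodule.span ℝ {F x, T x})

lemma memF {y : ℝ × ℝ} : F y ∈ Submodule.span ℝ {F y, T y} :=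
  Submodule.subset_span (Set.mem_insert _ _)

lemma memT {y : ℝ × ℝ} : T y ∈ Submodule.span ℝ {F y, T y} :=
  Submodule.subset_span (Set.mem_insert_of_mem _ rfl)

include hΩ hFs hTs hnull hiso in
lemma factA {τ : (ℝ × ℝ) → (Fin 6 → ℝ)} (hτ : IsSec Ω F T τ) {y : ℝ × ℝ} (hy : y ∈ Ω)
    (v : ℝ × ℝ) {u : Fin 6 → ℝ} (hu : u ∈ Submodule.span ℝ {F y, T y}) :
    Bf (fderiv ℝ τ y v) u = 0 := by
  refine Bf_span_right ?_ ?_ hu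
  · have hEq : Set.EqOn (fun z => Bf (τ z) (F z)) (fun _ => (0 : ℝ)) Ω := by
      intro z hz
      exact Bf_span_left (hnull z hz).1 (by rw [Bf_symm_s17]; exact (hnull z hz).2.2) (hτ.2 z hz)
    have h0 : fderiv ℝ (fun z => Bf (τ z) (F z)) y = 0 := by
      rw [fderiv_congr_on hΩ hEq hy]; simp
    have h1 := fderiv_Bf_apply (myDiffAt hΩ hτ.1 hy) (myDiffAt hΩ hFs hy) v
    rw [h0] at h1
    simp only [ContinuousLinearMap.zero_apply] at h1
    have h2 : Bf (τ y) (fderiv ℝ F y v) = 0 := by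
      rw [Bf_symm_s17]
      exact Bf_span_right (hiso y hy v).1 (hiso y hy v).2.1 (hτ.2 y hy)
    linarith
  · have hEq : Set.EqOn (fun z => Bf (τ z) (T z)) (fun _ => (0 : ℝ)) Ω := by
      intro z hz
      exact Bf_span_left (hnull z hz).2.2 (hnull z hz).2.1 (hτ.2 z hz)
    have h0 : fderiv ℝ (fun z => Bf (τ z) (T z)) y = 0 := by
      rw [fderiv_congr_on hΩ hEq hy]; simp
    have h1 := fderiv_Bf_apply (myDiffAt hΩ hτ.1 hy) (myDiffAt hΩ hTs hy) v
    rw [h0] at h1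
    simp only [ContinuousLinearMap.zero_apply] at h1
    have h2 : Bf (τ y) (fderiv ℝ T y v) = 0 := by
      rw [Bf_symm_s17]
      exact Bf_span_right (hiso y hy v).2.2.1 (hiso y hy v).2.2.2 (hτ.2 y hy)
    linarith

include hΩ hx hFs hTs hnull hiso humb in
lemma factB {τ : (ℝ × ℝ) → (Fin 6 → ℝ)} (hτ : IsSec Ω F T τ)
    (hτx : τ x ∈ Submodule.span ℝ {v₀}) (V W : ℝ × ℝ) {u : Fin 6 → ℝ}
    (hu : u ∈ Submodule.span ℝ {F x, T x}) :
    Bf (fderiv ℝ (fun y => fderiv ℝ τ y W) x V) u = 0 := by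
  have hdiff1 : DifferentiableAt ℝ (fun y => fderiv ℝ τ y W) x :=
    myDiffAt hΩ (mySmoothApply (mySmoothD hΩ hτ.1) W) hx
  refine Bf_span_right ?_ ?_ hu
  · have hEq : Set.EqOn (fun y => Bf (fderiv ℝ τ y W) (F y)) (fun _ => (0 : ℝ)) Ω :=
      fun y hy => factA hΩ hFs hTs hnull hiso hτ hy W memF
    have h0 : fderiv ℝ (fun y => Bf (fderiv ℝ τ y W) (F y)) x = 0 := by
      rw [fderiv_congr_on hΩ hEq hx]; simp
    have h1 := fderiv_Bf_apply hdiff1 (myDiffAt hΩ hFs hx) V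
    rw [h0] at h1
    simp only [ContinuousLinearMap.zero_apply] at h1
    have h2 : Bf (fderiv ℝ τ x W) (fderiv ℝ F x V) = 0 := by
      rw [Bf_symm_s17]
      exact Bf_span_right (hiso x hx V).1 (hiso x hx V).2.1 (humb τ hτ hτx W)
    linarith
  · have hEq : Set.EqOn (fun y => Bf (fderiv ℝ τ y W) (T y)) (fun _ => (0 : ℝ)) Ω :=
      fun y hy => factA hΩ hFs hTs hnull hiso hτ hy W memT
    have h0 : fderiv ℝ (fun y => Bf (fderiv ℝ τ y W) (T y)) x = 0 := by
      rw [fderiv_congr_on hΩ hEq hx]; simp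
    have h1 := fderiv_Bf_apply hdiff1 (myDiffAt hΩ hTs hx) V
    rw [h0] at h1
    simp only [ContinuousLinearMap.zero_apply] at h1
    have h2 : Bf (fderiv ℝ τ x W) (fderiv ℝ T x V) = 0 := by
      rw [Bf_symm_s17]
      exact Bf_span_right (hiso x hx V).2.2.1 (hiso x hx V).2.2.2 (humb τ hτ hτx W)
    linarith

include hΩ hx hFs hTs hnull hiso humb in
lemma factBi {ρ τ : (ℝ × ℝ) → (Fin 6 → ℝ)} (hρ : IsSec Ω F T ρ) (hτ : IsSec Ω F T τ)
    (hρx : ρ x ∈ Submodule.span ℝ {v₀}) (V W : ℝ × ℝ) :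
    Bf (fderiv ℝ (fun y => fderiv ℝ τ y W) x V) (ρ x) = 0 := by
  have hdiff1 : DifferentiableAt ℝ (fun y => fderiv ℝ τ y W) x :=
    myDiffAt hΩ (mySmoothApply (mySmoothD hΩ hτ.1) W) hx
  have hEq : Set.EqOn (fun y => Bf (fderiv ℝ τ y W) (ρ y)) (fun _ => (0 : ℝ)) Ω :=
    fun y hy => factA hΩ hFs hTs hnull hiso hτ hy W (hρ.2 y hy)
  have h0 : fderiv ℝ (fun y => Bf (fderiv ℝ τ y W) (ρ y)) x = 0 := by
    rw [fderiv_congr_on hΩ hEq hx]; simp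
  have h1 := fderiv_Bf_apply hdiff1 (myDiffAt hΩ hρ.1 hx) V
  rw [h0] at h1
  simp only [ContinuousLinearMap.zero_apply] at h1
  have h2 : Bf (fderiv ℝ τ x W) (fderiv ℝ ρ x V) = 0 :=
    factA hΩ hFs hTs hnull hiso hτ hx W (humb ρ hρ hρx V)
  linarith

include hΩ hx hFs hTs hnull hiso humb in
lemma factC {ρ τ : (ℝ × ℝ) → (Fin 6 → ℝ)} (hρ : IsSec Ω F T ρ) (hτ : IsSec Ω F T τ)
    (hρx : ρ x ∈ Submodule.span ℝ {v₀}) (hτx : τ x ∈ Submodule.span ℝ {v₀})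
    (V W U : ℝ × ℝ) :
    Bf (fderiv ℝ (fun y => fderiv ℝ (fun z => fderiv ℝ τ z U) y W) x V) (ρ x) = 0 := by
  set τ₁ : (ℝ × ℝ) → (Fin 6 → ℝ) := fun z => fderiv ℝ τ z U with hτ₁def
  have hτ₁s : ContDiffOn ℝ (⊤ : ℕ∞) τ₁ Ω := mySmoothApply (mySmoothD hΩ hτ.1) U
  have key : Set.EqOn (fun y => Bf (fderiv ℝ τ₁ y W) (ρ y))
      (fun y => -(Bf (τ₁ y) (fderiv ℝ ρ y W))) Ω := by
    intro y hy
    have hEq0 : Set.EqOn (fun z => Bf (τ₁ z) (ρ z)) (fun _ => (0 : ℝ)) Ω := fun z hz =>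
      factA hΩ hFs hTs hnull hiso hτ hz U (hρ.2 z hz)
    have h0 : fderiv ℝ (fun z => Bf (τ₁ z) (ρ z)) y = 0 := by
      rw [fderiv_congr_on hΩ hEq0 hy]; simp
    have h1 := fderiv_Bf_apply (myDiffAt hΩ hτ₁s hy) (myDiffAt hΩ hρ.1 hy) W
    rw [h0] at h1
    simp only [ContinuousLinearMap.zero_apply] at h1
    simp only
    linarith
  have hfd := fderiv_congr_on hΩ key hx
  have hfdV : fderiv ℝ (fun y => Bf (fderiv ℝ τ₁ y W) (ρ y)) x V
      = fderiv ℝ (fun y => -(Bf (τ₁ y) (fderiv ℝ ρ y W))) x V := by rw [hfd]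
  have hL := fderiv_Bf_apply (myDiffAt hΩ (mySmoothApply (mySmoothD hΩ hτ₁s) W) hx)
    (myDiffAt hΩ hρ.1 hx) V
  have hR : fderiv ℝ (fun y => -(Bf (τ₁ y) (fderiv ℝ ρ y W))) x V
      = -(Bf (fderiv ℝ τ₁ x V) (fderiv ℝ ρ x W)
          + Bf (τ₁ x) (fderiv ℝ (fun y => fderiv ℝ ρ y W) x V)) := by
    rw [fderiv_fun_neg, ContinuousLinearMap.neg_apply,
      fderiv_Bf_apply (myDiffAt hΩ hτ₁s hx)
        (myDiffAt hΩ (mySmoothApply (mySmoothD hΩ hρ.1) W) hx) V]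
  have t1 : Bf (fderiv ℝ τ₁ x W) (fderiv ℝ ρ x V) = 0 :=
    factB hΩ hx hFs hTs hnull hiso humb hτ hτx W U (humb ρ hρ hρx V)
  have t2 : Bf (fderiv ℝ τ₁ x V) (fderiv ℝ ρ x W) = 0 :=
    factB hΩ hx hFs hTs hnull hiso humb hτ hτx V U (humb ρ hρ hρx W)
  have t3 : Bf (τ₁ x) (fderiv ℝ (fun y => fderiv ℝ ρ y W) x V) = 0 := by
    rw [Bf_symm_s17]
    exact factB hΩ hx hFs hTs hnull hiso humb hρ hρx V W (humb τ hτ hτx U)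
  linarith

end Geom

section Third

variable {Ω : Set (ℝ × ℝ)} (hΩ : IsOpen Ω) {x : ℝ × ℝ} (hx : x ∈ Ω)
  {τ : (ℝ × ℝ) → (Fin 6 → ℝ)} (hτs : ContDiffOn ℝ (⊤ : ℕ∞) τ Ω)

include hΩ hx hτs in
lemma c1lem (v w u : ℝ × ℝ) :
    fderiv ℝ (fun y => fderiv ℝ (fderiv ℝ τ) y v w) x u
      = fderiv ℝ (fderiv ℝ (fderiv ℝ τ)) x u v w := by
  have hA2x : DifferentiableAt ℝ (fderiv ℝ (fderiv ℝ τ)) x :=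
    myDiffAt hΩ (mySmoothD hΩ (mySmoothD hΩ hτs)) hx
  have hB : DifferentiableAt ℝ (fun y => fderiv ℝ (fderiv ℝ τ) y v) x :=
    hA2x.clm_apply (differentiableAt_const v)
  have e1 : fderiv ℝ (fun y => fderiv ℝ (fderiv ℝ τ) y v w) x u
      = fderiv ℝ (fun y => fderiv ℝ (fderiv ℝ τ) y v) x u w :=
    fderiv_apply_const (A := fun y => fderiv ℝ (fderiv ℝ τ) y v) hB w u
  have e2 : fderiv ℝ (fun y => fderiv ℝ (fderiv ℝ τ) y v) x u
      = fderiv ℝ (fderiv ℝ (fderiv ℝ τ)) x u v :=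
    fderiv_apply_const hA2x v u
  rw [e1, e2]

include hΩ hx hτs in
lemma conv3 (u v w : ℝ × ℝ) :
    fderiv ℝ (fun y => fderiv ℝ (fun z => fderiv ℝ τ z w) y v) x u
      = fderiv ℝ (fderiv ℝ (fderiv ℝ τ)) x u v w := by
  have hAs : ContDiffOn ℝ (⊤ : ℕ∞) (fderiv ℝ τ) Ω := mySmoothD hΩ hτs
  have h₂ : Set.EqOn (fun y => fderiv ℝ (fun z => fderiv ℝ τ z w) y v)
      (fun y => fderiv ℝ (fderiv ℝ τ) y v w) Ω := fun y hy =>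
    fderiv_apply_const (myDiffAt hΩ hAs hy) w v
  rw [fderiv_congr_on hΩ h₂ hx]
  exact c1lem hΩ hx hτs v w u

include hΩ hx hτs in
lemma A3_symm12 (u v w : ℝ × ℝ) :
    fderiv ℝ (fderiv ℝ (fderiv ℝ τ)) x u v w
      = fderiv ℝ (fderiv ℝ (fderiv ℝ τ)) x v u w := by
  have hAs : ContDiffOn ℝ (⊤ : ℕ∞) (fderiv ℝ τ) Ω := mySmoothD hΩ hτs
  have hφs : ContDiffOn ℝ (⊤ : ℕ∞) (fun y => fderiv ℝ τ y w) Ω := mySmoothApply hAs w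
  have hφsym : IsSymmSndFDerivAt ℝ (fun y => fderiv ℝ τ y w) x :=
    (hφs.contDiffAt (hΩ.mem_nhds hx)).isSymmSndFDerivAt (by rw [minSmoothness_of_isRCLikeNormedField]; exact WithTop.coe_le_coe.2 le_top)
  have hφd : ContDiffOn ℝ (⊤ : ℕ∞) (fderiv ℝ (fun y => fderiv ℝ τ y w)) Ω := mySmoothD hΩ hφs
  have e3 : ∀ u' v' : ℝ × ℝ,
      fderiv ℝ (fderiv ℝ (fun y => fderiv ℝ τ y w)) x u' v'
        = fderiv ℝ (fderiv ℝ (fderiv ℝ τ)) x u' v' w := by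
    intro u' v'
    have h₁ : fderiv ℝ (fderiv ℝ (fun y => fderiv ℝ τ y w)) x u' v'
        = fderiv ℝ (fun y => fderiv ℝ (fun z => fderiv ℝ τ z w) y v') x u' :=
      (fderiv_apply_const (myDiffAt hΩ hφd hx) v' u').symm
    rw [h₁, conv3 hΩ hx hτs u' v' w]
  rw [← e3 u v, ← e3 v u]
  exact hφsym u v

include hΩ hx hτs in
lemma A3_symm23 (u v w : ℝ × ℝ) :
    fderiv ℝ (fderiv ℝ (fderiv ℝ τ)) x u v w
      = fderiv ℝ (fderiv ℝ (fderiv ℝ τ)) x u w v := by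
  have h2 : Set.EqOn (fun y => fderiv ℝ (fderiv ℝ τ) y v w)
      (fun y => fderiv ℝ (fderiv ℝ τ) y w v) Ω := fun y hy =>
    ((hτs.contDiffAt (hΩ.mem_nhds hy)).isSymmSndFDerivAt (by rw [minSmoothness_of_isRCLikeNormedField]; exact WithTop.coe_le_coe.2 le_top)) v w
  rw [← c1lem hΩ hx hτs v w u, ← c1lem hΩ hx hτs w v u, fderiv_congr_on hΩ h2 hx]

include hΩ hx in
lemma A3_add {δ : (ℝ × ℝ) → (Fin 6 → ℝ)} (hτs : ContDiffOn ℝ (⊤ : ℕ∞) τ Ω)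
    (hδs : ContDiffOn ℝ (⊤ : ℕ∞) δ Ω) (u v w : ℝ × ℝ) :
    fderiv ℝ (fderiv ℝ (fderiv ℝ (fun y => τ y + δ y))) x u v w
      = fderiv ℝ (fderiv ℝ (fderiv ℝ τ)) x u v w
        + fderiv ℝ (fderiv ℝ (fderiv ℝ δ)) x u v w := by
  have hτd := mySmoothD hΩ hτs
  have hδd := mySmoothD hΩ hδs
  have L1 : Set.EqOn (fderiv ℝ (fun y => τ y + δ y))
      (fun y => fderiv ℝ τ y + fderiv ℝ δ y) Ω := fun y hy =>
    fderiv_add (myDiffAt hΩ hτs hy) (myDiffAt hΩ hδs hy)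
  have L2 : Set.EqOn (fderiv ℝ (fderiv ℝ (fun y => τ y + δ y)))
      (fun y => fderiv ℝ (fderiv ℝ τ) y + fderiv ℝ (fderiv ℝ δ) y) Ω := by
    intro y hy
    rw [fderiv_congr_on hΩ L1 hy]
    exact fderiv_add (myDiffAt hΩ hτd hy) (myDiffAt hΩ hδd hy)
  rw [fderiv_congr_on hΩ L2 hx,
    fderiv_fun_add (myDiffAt hΩ (mySmoothD hΩ hτd) hx) (myDiffAt hΩ (mySmoothD hΩ hδd) hx)]
  simp

end Third

section Master

variable {Ω : Set (ℝ × ℝ)} (hΩ : IsOpen Ω) {x : ℝ × ℝ} (hx : x ∈ Ω)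
    {F T : (ℝ × ℝ) → (Fin 6 → ℝ)}
    (hFs : ContDiffOn ℝ (⊤ : ℕ∞) F Ω) (hTs : ContDiffOn ℝ (⊤ : ℕ∞) T Ω)
    (hnull : ∀ y ∈ Ω, Bf (F y) (F y) = 0 ∧ Bf (T y) (T y) = 0 ∧ Bf (F y) (T y) = 0)
    (hiso : ∀ y ∈ Ω, ∀ V : ℝ × ℝ,
      Bf (fderiv ℝ F y V) (F y) = 0 ∧ Bf (fderiv ℝ F y V) (T y) = 0 ∧
      Bf (fderiv ℝ T y V) (F y) = 0 ∧ Bf (fderiv ℝ T y V) (T y) = 0)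
    {v₀ : Fin 6 → ℝ} (hv₀F : v₀ ∈ Submodule.span ℝ {F x, T x})
    (humb : ∀ σ : (ℝ × ℝ) → (Fin 6 → ℝ), IsSec Ω F T σ →
      σ x ∈ Submodule.span ℝ {v₀} →
      ∀ V : ℝ × ℝ, fderiv ℝ σ x V ∈ Submodule.span ℝ {F x, T x})

include hΩ hx hFs hTs hnull hiso hv₀F humb in
lemma master {ρ τ : (ℝ × ℝ) → (Fin 6 → ℝ)} (hρ : IsSec Ω F T ρ) (hτ : IsSec Ω F T τ)
    (hρx : ρ x ∈ Submodule.span ℝ {v₀})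
    {X Y Z : (ℝ × ℝ) → ℝ × ℝ} (hX : ContDiffOn ℝ (⊤ : ℕ∞) X Ω) (hY : ContDiffOn ℝ (⊤ : ℕ∞) Y Ω)
    (hZ : ContDiffOn ℝ (⊤ : ℕ∞) Z Ω) :
    cub X Y Z ρ τ x
      = Bf (fderiv ℝ (fderiv ℝ (fderiv ℝ τ)) x (X x) (Y x) (Z x)) (ρ x) := by
  have hρF : ρ x ∈ Submodule.span ℝ {F x, T x} := by
    obtain ⟨c, hc⟩ := Submodule.mem_span_singleton.1 hρx
    rw [← hc]; exact Submodule.smul_mem _ c hv₀F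
  have hAs : ContDiffOn ℝ (⊤ : ℕ∞) (fderiv ℝ τ) Ω := mySmoothD hΩ hτ.1
  have hA2s : ContDiffOn ℝ (⊤ : ℕ∞) (fderiv ℝ (fderiv ℝ τ)) Ω := mySmoothD hΩ hAs
  have hAx : DifferentiableAt ℝ (fderiv ℝ τ) x := myDiffAt hΩ hAs hx
  have hA2x : DifferentiableAt ℝ (fderiv ℝ (fderiv ℝ τ)) x := myDiffAt hΩ hA2s hx
  have hYx : DifferentiableAt ℝ Y x := myDiffAt hΩ hY hx
  have hZx : DifferentiableAt ℝ Z x := myDiffAt hΩ hZ hx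
  have hdZ : DifferentiableAt ℝ (fderiv ℝ Z) x := myDiffAt hΩ (mySmoothD hΩ hZ) hx
  have hW₁ : DifferentiableAt ℝ (fun y => fderiv ℝ Z y (Y y)) x := hdZ.clm_apply hYx
  have hC : DifferentiableAt ℝ (fun y => fderiv ℝ (fderiv ℝ τ) y (Y y)) x :=
    hA2x.clm_apply hYx
  have hs₁ : DifferentiableAt ℝ (fun y => fderiv ℝ τ y (fderiv ℝ Z y (Y y))) x :=
    hAx.clm_apply hW₁
  have hs₂ : DifferentiableAt ℝ (fun y => fderiv ℝ (fderiv ℝ τ) y (Y y) (Z y)) x :=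
    hC.clm_apply hZx
  have m2 : Set.EqOn (dirD Y (dirD Z τ))
      (fun y => fderiv ℝ τ y (fderiv ℝ Z y (Y y))
        + fderiv ℝ (fderiv ℝ τ) y (Y y) (Z y)) Ω := by
    intro y hy
    show fderiv ℝ (fun y' => fderiv ℝ τ y' (Z y')) y (Y y) = _
    rw [fderiv_apply_pt (A := fderiv ℝ τ) (u := Z) (myDiffAt hΩ hAs hy)
      (myDiffAt hΩ hZ hy) (Y y)]
  have m3 : cub X Y Z ρ τ x
      = Bf (fderiv ℝ (fun y => fderiv ℝ τ y (fderiv ℝ Z y (Y y))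
          + fderiv ℝ (fderiv ℝ τ) y (Y y) (Z y)) x (X x)) (ρ x) := by
    show Bf (fderiv ℝ (dirD Y (dirD Z τ)) x (X x)) (ρ x) = _
    rw [fderiv_congr_on hΩ m2 hx]
  rw [m3, fderiv_fun_add hs₁ hs₂, ContinuousLinearMap.add_apply,
    fderiv_apply_pt (A := fderiv ℝ τ) (u := fun y => fderiv ℝ Z y (Y y)) hAx hW₁ (X x),
    show fderiv ℝ (fun y => fderiv ℝ (fderiv ℝ τ) y (Y y) (Z y)) x (X x)
        = (fun y => fderiv ℝ (fderiv ℝ τ) y (Y y)) x (fderiv ℝ Z x (X x))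
          + fderiv ℝ (fun y => fderiv ℝ (fderiv ℝ τ) y (Y y)) x (X x) (Z x) from
      fderiv_apply_pt (A := fun y => fderiv ℝ (fderiv ℝ τ) y (Y y)) (u := Z) hC hZx (X x),
    fderiv_apply_pt (A := fderiv ℝ (fderiv ℝ τ)) (u := Y) hA2x hYx (X x)]
  simp only [ContinuousLinearMap.add_apply, Bf_add_left_s17]
  have conv2 : ∀ v w : ℝ × ℝ, Bf (fderiv ℝ (fderiv ℝ τ) x v w) (ρ x) = 0 := by
    intro v w
    rw [← fderiv_apply_const hAx w v]
    exact factBi hΩ hx hFs hTs hnull hiso humb hρ hτ hρx v w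
  have t1 : Bf (fderiv ℝ τ x (fderiv ℝ (fun y => fderiv ℝ Z y (Y y)) x (X x))) (ρ x) = 0 :=
    factA hΩ hFs hTs hnull hiso hτ hx _ hρF
  have t2 : Bf (fderiv ℝ (fderiv ℝ τ) x (X x) (fderiv ℝ Z x (Y x))) (ρ x) = 0 := conv2 _ _
  have t3 : Bf (fderiv ℝ (fderiv ℝ τ) x (Y x) (fderiv ℝ Z x (X x))) (ρ x) = 0 := conv2 _ _
  have t4 : Bf (fderiv ℝ (fderiv ℝ τ) x (fderiv ℝ Y x (X x)) (Z x)) (ρ x) = 0 := conv2 _ _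
  linarith

end Master

theorem stmt17 (Ω : Set (ℝ × ℝ)) (hΩ : IsOpen Ω) (x : ℝ × ℝ) (hx : x ∈ Ω)
    (F T : (ℝ × ℝ) → (Fin 6 → ℝ))
    (hFs : ContDiffOn ℝ (⊤ : ℕ∞) F Ω) (hTs : ContDiffOn ℝ (⊤ : ℕ∞) T Ω)
    (hFT : ∀ y ∈ Ω, LinearIndependent ℝ ![F y, T y])
    -- 𝓕 = span{F,T} is totally null
    (hnull : ∀ y ∈ Ω, Bf (F y) (F y) = 0 ∧ Bf (T y) (T y) = 0 ∧ Bf (F y) (T y) = 0)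
    -- isotropy: (dσ₁, σ₂) = 0 for all sections; stated on the generators
    (hiso : ∀ y ∈ Ω, ∀ V : ℝ × ℝ,
      Bf (fderiv ℝ F y V) (F y) = 0 ∧ Bf (fderiv ℝ F y V) (T y) = 0 ∧
      Bf (fderiv ℝ T y V) (F y) = 0 ∧ Bf (fderiv ℝ T y V) (T y) = 0)
    -- x is umbilic with (unique) curvature sphere line s(x) = span{v₀}
    (v₀ : Fin 6 → ℝ) (hv₀ : v₀ ≠ 0) (hv₀F : v₀ ∈ Submodule.span ℝ {F x, T x})
    (humb : ∀ σ : (ℝ × ℝ) → (Fin 6 → ℝ), IsSec Ω F T σ →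
      σ x ∈ Submodule.span ℝ {v₀} →
      ∀ V : ℝ × ℝ, fderiv ℝ σ x V ∈ Submodule.span ℝ {F x, T x}) :
    ∀ σ σt : (ℝ × ℝ) → (Fin 6 → ℝ), IsSec Ω F T σ → IsSec Ω F T σt →
      σ x ∈ Submodule.span ℝ {v₀} →
      -- (i) second derivatives of any section pair to zero against σ(x)
      ((∀ V W : ℝ × ℝ,
          Bf (fderiv ℝ (fun y => fderiv ℝ σt y W) x V) (σ x) = 0) ∧
      -- (ii) 𝒞ₓ(s(x),s(x)) = 0
      (∀ V W U : ℝ × ℝ,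
          Bf (fderiv ℝ (fun y => fderiv ℝ (fun z => fderiv ℝ σ z U) y W) x V)
            (σ x) = 0) ∧
      -- (iii) 𝒞 is tensorial at x ...
      (∀ X Y Z X' Y' Z' : (ℝ × ℝ) → ℝ × ℝ,
          ContDiffOn ℝ (⊤ : ℕ∞) X Ω → ContDiffOn ℝ (⊤ : ℕ∞) Y Ω → ContDiffOn ℝ (⊤ : ℕ∞) Z Ω →
          ContDiffOn ℝ (⊤ : ℕ∞) X' Ω → ContDiffOn ℝ (⊤ : ℕ∞) Y' Ω → ContDiffOn ℝ (⊤ : ℕ∞) Z' Ω →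
          X x = X' x → Y x = Y' x → Z x = Z' x →
          cub X Y Z σ σt x = cub X' Y' Z' σ σt x) ∧
      -- ... ℝ-multilinear ...
      (∀ (c : ℝ) (V V' W U : ℝ × ℝ),
          cub (fun _ => V + V') (fun _ => W) (fun _ => U) σ σt x
            = cub (fun _ => V) (fun _ => W) (fun _ => U) σ σt x
              + cub (fun _ => V') (fun _ => W) (fun _ => U) σ σt x ∧
          cub (fun _ => c • V) (fun _ => W) (fun _ => U) σ σt x
            = c * cub (fun _ => V) (fun _ => W) (fun _ => U) σ σt x) ∧
      -- ... and symmetric in X, Y, Z at x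
      (∀ X Y Z : (ℝ × ℝ) → ℝ × ℝ,
          ContDiffOn ℝ (⊤ : ℕ∞) X Ω → ContDiffOn ℝ (⊤ : ℕ∞) Y Ω → ContDiffOn ℝ (⊤ : ℕ∞) Z Ω →
          cub X Y Z σ σt x = cub Y X Z σ σt x ∧
          cub X Y Z σ σt x = cub X Z Y σ σt x) ∧
      -- (iv) the value of 𝒞 at x depends only on σ(x) and σ̃(x) mod s(x)
      (∀ σ' σt' : (ℝ × ℝ) → (Fin 6 → ℝ), IsSec Ω F T σ' → IsSec Ω F T σt' →
          σ' x = σ x → σt' x - σt x ∈ Submodule.span ℝ {σ x} →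
          ∀ X Y Z : (ℝ × ℝ) → ℝ × ℝ,
            ContDiffOn ℝ (⊤ : ℕ∞) X Ω → ContDiffOn ℝ (⊤ : ℕ∞) Y Ω → ContDiffOn ℝ (⊤ : ℕ∞) Z Ω →
            cub X Y Z σ' σt' x = cub X Y Z σ σt x)) := by
  intro σ σt hσ hσt hσx
  refine ⟨?_, ?_, ?_, ?_, ?_, ?_⟩
  · intro V W
    exact factBi hΩ hx hFs hTs hnull hiso humb hσ hσt hσx V W
  · intro V W U
    exact factC hΩ hx hFs hTs hnull hiso humb hσ hσ hσx hσx V W U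
  · intro X Y Z X' Y' Z' hX hY hZ hX' hY' hZ' e1 e2 e3
    rw [master hΩ hx hFs hTs hnull hiso hv₀F humb hσ hσt hσx hX hY hZ,
      master hΩ hx hFs hTs hnull hiso hv₀F humb hσ hσt hσx hX' hY' hZ', e1, e2, e3]
  · intro c V V' W U
    constructor
    · rw [master hΩ hx hFs hTs hnull hiso hv₀F humb hσ hσt hσx contDiffOn_const
        contDiffOn_const contDiffOn_const,
        master hΩ hx hFs hTs hnull hiso hv₀F humb hσ hσt hσx contDiffOn_const
        contDiffOn_const contDiffOn_const,
        master hΩ hx hFs hTs hnull hiso hv₀F humb hσ hσt hσx contDiffOn_const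
        contDiffOn_const contDiffOn_const]
      rw [map_add, ContinuousLinearMap.add_apply, ContinuousLinearMap.add_apply,
        Bf_add_left_s17]
    · rw [master hΩ hx hFs hTs hnull hiso hv₀F humb hσ hσt hσx contDiffOn_const
        contDiffOn_const contDiffOn_const,
        master hΩ hx hFs hTs hnull hiso hv₀F humb hσ hσt hσx contDiffOn_const
        contDiffOn_const contDiffOn_const]
      rw [map_smul, ContinuousLinearMap.smul_apply, ContinuousLinearMap.smul_apply,
        Bf_smul_left_s17]
  · intro X Y Z hX hY hZ
    constructor
    · rw [master hΩ hx hFs hTs hnull hiso hv₀F humb hσ hσt hσx hX hY hZ,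
        master hΩ hx hFs hTs hnull hiso hv₀F humb hσ hσt hσx hY hX hZ,
        A3_symm12 hΩ hx hσt.1 (X x) (Y x) (Z x)]
    · rw [master hΩ hx hFs hTs hnull hiso hv₀F humb hσ hσt hσx hX hY hZ,
        master hΩ hx hFs hTs hnull hiso hv₀F humb hσ hσt hσx hX hZ hY,
        A3_symm23 hΩ hx hσt.1 (X x) (Y x) (Z x)]
  · intro σ' σt' hσ'sec hσt'sec hσ'x hδmem X Y Z hX hY hZ
    have hσ'x0 : σ' x ∈ Submodule.span ℝ {v₀} := by rw [hσ'x]; exact hσx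
    have hδsec : IsSec Ω F T (fun y => σt' y - σt y) :=
      ⟨hσt'sec.1.sub hσt.1, fun y hy => Submodule.sub_mem _ (hσt'sec.2 y hy) (hσt.2 y hy)⟩
    have hδx : (fun y => σt' y - σt y) x ∈ Submodule.span ℝ {v₀} := by
      obtain ⟨c, hc⟩ := Submodule.mem_span_singleton.1 hδmem
      show σt' x - σt x ∈ _
      rw [← hc]
      exact Submodule.smul_mem _ c hσx
    have hrw : σt' = fun y => σt y + (σt' y - σt y) := by funext y; abel
    rw [master hΩ hx hFs hTs hnull hiso hv₀F humb hσ'sec hσt'sec hσ'x0 hX hY hZ,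
      master hΩ hx hFs hTs hnull hiso hv₀F humb hσ hσt hσx hX hY hZ, hσ'x, hrw,
      A3_add hΩ hx hσt.1 hδsec.1 (X x) (Y x) (Z x)]
    have h0 : Bf (fderiv ℝ (fderiv ℝ (fderiv ℝ (fun y => σt' y - σt y))) x
        (X x) (Y x) (Z x)) (σ x) = 0 := by
      rw [← conv3 hΩ hx hδsec.1 (X x) (Y x) (Z x)]
      exact factC hΩ hx hFs hTs hnull hiso humb hσ hδsec hσx hδx (X x) (Y x) (Z x)
    rw [Bf_add_left_s17, h0, add_zero]
end
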